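/- arXiv:1405.1636 — 9 statements merged into one kernel-verified Lean document; each statement's English description precedes it below -/
import Mathlib

section
/- For n ≥ 3, the number of independent sets of the cycle graph C_n equals the Lucas number L_n, where L_n = F_{n+1} + F_{n-1}. -/
/-!
Identify a subset of `Fin n` with a subset of `{0, …, n-1}`. The subsets of an interval of
length `m` with no two consecutive elements number `F_{m+2}`: splitting on the top element gives
the Fibonacci recursion. An independent set of `C_n` is such a subset of `{0, …, n-1}` that does
not contain both `0` and `n-1`. Those avoiding `n-1` are the consecutive-free subsets of
`{0, …, n-2}`, giving `F_{n+1}`; those containing `n-1` are `n-1` together with a consecutive-free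
subset of `{1, …, n-3}`, giving `F_{n-1}`.
-/

open Finset

def sparseSubsets (a m : ℕ) : Finset (Finset ℕ) :=
  (Ico a (a + m)).powerset.filter fun t => ∀ i ∈ t, i + 1 ∉ t

@[simp]
lemma mem_sparseSubsets {a m : ℕ} {t : Finset ℕ} :
    t ∈ sparseSubsets a m ↔ t ⊆ Ico a (a + m) ∧ ∀ i ∈ t, i + 1 ∉ t := by
  simp [sparseSubsets]

lemma filter_notMem_sparseSubsets (a m : ℕ) :
    (sparseSubsets a (m + 1)).filter (a + m ∉ ·) = sparseSubsets a m := by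
  ext t
  simp only [mem_filter, mem_sparseSubsets, subset_iff, mem_Ico]
  constructor
  · rintro ⟨⟨hsub, hsparse⟩, htop⟩
    refine ⟨fun i hi => ?_, hsparse⟩
    have := hsub hi
    have : i ≠ a + m := by rintro rfl; exact htop hi
    omega
  · rintro ⟨hsub, hsparse⟩
    refine ⟨⟨fun i hi => ?_, hsparse⟩, fun h => ?_⟩
    · have := hsub hi; omega
    · have := hsub h; omega

lemma card_filter_mem_sparseSubsets (a m : ℕ) :
    #((sparseSubsets a (m + 2)).filter (a + m + 1 ∈ ·)) = #(sparseSubsets a m) := by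
  refine card_nbij' (·.erase (a + m + 1)) (insert (a + m + 1)) ?_ ?_ ?_ ?_
  · intro t ht
    simp only [mem_coe, mem_filter, mem_sparseSubsets, subset_iff, mem_Ico] at ht
    obtain ⟨⟨hsub, hsparse⟩, htop⟩ := ht
    simp only [mem_coe, mem_sparseSubsets, subset_iff, mem_Ico, mem_erase]
    refine ⟨fun i ⟨hne, hi⟩ => ?_, fun i ⟨_, hi⟩ ⟨_, hi'⟩ => hsparse i hi hi'⟩
    have := hsub hi
    have : i ≠ a + m := by rintro rfl; exact hsparse _ hi htop
    omega
  · intro t ht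
    simp only [mem_coe, mem_sparseSubsets, subset_iff, mem_Ico] at ht
    obtain ⟨hsub, hsparse⟩ := ht
    simp only [mem_coe, mem_filter, mem_sparseSubsets, subset_iff, mem_Ico, mem_insert]
    refine ⟨⟨?_, ?_⟩, by simp⟩
    · rintro i (rfl | hi)
      · omega
      · have := hsub hi; omega
    · rintro i (rfl | hi) (h | h)
      · omega
      · have := hsub h; omega
      · have := hsub hi; omega
      · exact hsparse i hi h
  · intro t ht
    rw [mem_coe, mem_filter] at ht
    exact insert_erase ht.2
  · intro t ht
    simp only [mem_coe, mem_sparseSubsets, subset_iff, mem_Ico] at ht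
    refine erase_insert fun h => ?_
    have := ht.1 h; omega

theorem card_sparseSubsets (a : ℕ) : ∀ m, #(sparseSubsets a m) = Nat.fib (m + 2)
  | 0 => by simp [sparseSubsets, filter_singleton]
  | 1 => by
    rw [sparseSubsets, Nat.Ico_succ_singleton, ← insert_empty, powerset_insert]
    simp [filter_insert, filter_singleton, Nat.fib_add_two]
  | m + 2 => by
    rw [← card_filter_add_card_filter_not (a + m + 1 ∈ ·), card_filter_mem_sparseSubsets,
      show a + m + 1 = a + (m + 1) by omega, filter_notMem_sparseSubsets,
      card_sparseSubsets a m, card_sparseSubsets a (m + 1), Nat.fib_add_two (n := m + 2)]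

def cycleIndepSets (n : ℕ) : Finset (Finset ℕ) :=
  (range n).powerset.filter fun t => ∀ i ∈ t, (i + 1) % n ∉ t

lemma mem_cycleIndepSets {n : ℕ} {t : Finset ℕ} :
    t ∈ cycleIndepSets n ↔
      t ⊆ range n ∧ (∀ i ∈ t, i + 1 ∉ t) ∧ ¬(n - 1 ∈ t ∧ 0 ∈ t) := by
  rw [cycleIndepSets, mem_filter, mem_powerset]
  refine and_congr_right fun ht => ?_
  have hlt : ∀ i ∈ t, i < n := fun i hi => mem_range.1 (ht hi)
  constructor
  · intro h
    refine ⟨fun i hi hi' => h i hi ?_, fun ⟨hlast, hzero⟩ => h _ hlast ?_⟩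
    · rwa [Nat.mod_eq_of_lt (hlt _ hi')]
    · have := hlt _ hlast
      rwa [Nat.sub_add_cancel (by omega), Nat.mod_self]
  · rintro ⟨hsparse, hwrap⟩ i hi hi'
    by_cases hin : i + 1 < n
    · exact hsparse i hi (by rwa [Nat.mod_eq_of_lt hin] at hi')
    · have hsucc : i + 1 = n := by have := hlt i hi; omega
      rw [hsucc, Nat.mod_self] at hi'
      exact hwrap ⟨by rwa [← hsucc, Nat.add_sub_cancel], hi'⟩

lemma filter_mem_cycleIndepSets (m : ℕ) :
    (cycleIndepSets (m + 3)).filter (m + 2 ∈ ·) =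
      (sparseSubsets 1 (m + 2)).filter (1 + m + 1 ∈ ·) := by
  ext t
  simp only [mem_filter, mem_cycleIndepSets, mem_sparseSubsets, subset_iff, mem_range, mem_Ico,
    show 1 + m + 1 = m + 2 by omega, show 1 + (m + 2) = m + 3 by omega]
  constructor
  · rintro ⟨⟨hsub, hsparse, hwrap⟩, htop⟩
    refine ⟨⟨fun x hx => ⟨Nat.one_le_iff_ne_zero.2 ?_, hsub hx⟩, hsparse⟩, htop⟩
    rintro rfl
    exact hwrap ⟨htop, hx⟩
  · rintro ⟨⟨hsub, hsparse⟩, htop⟩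
    exact ⟨⟨fun x hx => (hsub hx).2, hsparse, fun ⟨_, h0⟩ => by simpa using hsub h0⟩, htop⟩

lemma filter_notMem_cycleIndepSets (m : ℕ) :
    (cycleIndepSets (m + 3)).filter (m + 2 ∉ ·) =
      (sparseSubsets 0 (m + 3)).filter (0 + (m + 2) ∉ ·) := by
  ext t
  simp only [mem_filter, mem_cycleIndepSets, mem_sparseSubsets, subset_iff, mem_range, mem_Ico,
    zero_le, true_and, zero_add]
  tauto

theorem card_cycleIndepSets (m : ℕ) :
    #(cycleIndepSets (m + 3)) = Nat.fib (m + 4) + Nat.fib (m + 2) := by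
  rw [← card_filter_add_card_filter_not (m + 2 ∈ ·), filter_mem_cycleIndepSets,
    filter_notMem_cycleIndepSets, card_filter_mem_sparseSubsets, filter_notMem_sparseSubsets,
    card_sparseSubsets, card_sparseSubsets, add_comm]

lemma card_filter_powerset_univ_fin (n : ℕ) (P : Finset ℕ → Prop) [DecidablePred P] :
    #((univ : Finset (Fin n)).powerset.filter fun s => P (s.map Fin.valEmbedding)) =
      #((range n).powerset.filter P) := by
  refine card_bij (fun s _ => s.map Fin.valEmbedding) ?_ ?_ ?_
  · intro s hs
    simp only [mem_filter, mem_powerset] at hs ⊢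
    refine ⟨fun i hi => ?_, hs.2⟩
    obtain ⟨j, -, rfl⟩ := mem_map.1 hi
    exact mem_range.2 j.2
  · intro s _ s' _ h
    exact map_injective _ h
  · intro t ht
    simp only [mem_filter, mem_powerset] at ht
    have hlt : ∀ i ∈ t, i < n := fun i hi => mem_range.1 (ht.1 hi)
    exact ⟨t.attachFin hlt, by simpa using ht.2, map_valEmbedding_attachFin hlt⟩

/-- For `n ≥ 3`, the number of independent sets of the cycle graph `C_n`
equals the Lucas number `L_n = F_{n+1} + F_{n-1}`. -/
theorem cycle_indep_count (n : ℕ) (hn : 3 ≤ n) :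
    ((Finset.univ : Finset (Fin n)).powerset.filter
      (fun s => ∀ i ∈ s, ∀ j ∈ s, (i.val + 1) % n = j.val → False)).card
      = Nat.fib (n + 1) + Nat.fib (n - 1) := by
  obtain ⟨m, rfl⟩ : ∃ m, n = m + 3 := ⟨n - 3, by omega⟩
  rw [show m + 3 + 1 = m + 4 by rfl, show m + 3 - 1 = m + 2 by rfl, ← card_cycleIndepSets,
    cycleIndepSets, ← card_filter_powerset_univ_fin]
  congr 1
  refine filter_congr fun s _ => ?_
  rw [forall_mem_map]
  simp only [mem_map, Fin.valEmbedding_apply, not_exists, not_and]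
  exact forall₂_congr fun _ _ => forall₂_congr fun _ _ => not_congr eq_comm
end

section
/- The number of compositions of n all of whose internal parts are greater than 1 (i.e. compositions (α_1,...,α_ℓ) with α_i > 1 for all 1 < i < ℓ) equals the Fibonacci number F_{n+1}. -/
/-!
Let `A n` be the set of compositions of `n` whose internal parts exceed `1`; then
`#A (n + 2) = #A (n + 1) + #A n`. Lowering the first part by one is a bijection from the
members of `A (n + 2)` whose first part is at least `2` onto `A (n + 1)`. The members that
start with `1` are `1 :: t` where the first part of `t` exceeds `1` unless `t` is a single
part; lowering the first part of `t`, and deleting it when it becomes `0`, maps them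
bijectively onto `A n`. Both maps are inverted by raising the first part by one.
-/

open Finset

namespace List

variable {α : Type*}

def internalParts (l : List α) : List α := l.tail.dropLast

@[simp] lemma internalParts_cons (a : α) (t : List α) : internalParts (a :: t) = t.dropLast := rfl

lemma forall_mem_dropLast_iff {p : α → Prop} {l : List α} (d : α) :
    (∀ x ∈ l.dropLast, p x) ↔ ∀ i, i + 1 < l.length → p (l.getD i d) := by
  simp only [mem_iff_getElem, length_dropLast, getElem_dropLast]
  constructor
  · intro h i hi
    rw [getD_eq_getElem _ _ (by omega)]
    exact h _ ⟨i, by omega, rfl⟩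
  · rintro h _ ⟨i, hi, rfl⟩
    have := h i (by omega)
    rwa [getD_eq_getElem _ _ (by omega)] at this

lemma forall_mem_internalParts_iff {p : α → Prop} {l : List α} (d : α) :
    (∀ x ∈ internalParts l, p x) ↔ ∀ i, 0 < i → i + 1 < l.length → p (l.getD i d) := by
  cases l with
  | nil => simp [internalParts]
  | cons a t =>
    rw [internalParts_cons, forall_mem_dropLast_iff d]
    constructor
    · rintro h (_ | i) hi hlen
      · omega
      · exact h i (by simpa using hlen)
    · intro h i hi
      exact h (i + 1) i.succ_pos (by simpa using hi)

def succHead (l : List ℕ) : List ℕ := (l.headI + 1) :: l.tail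

@[simp] lemma succHead_nil : succHead [] = [1] := rfl

@[simp] lemma succHead_cons (a : ℕ) (t : List ℕ) : succHead (a :: t) = (a + 1) :: t := rfl

@[simp] lemma headI_succHead (l : List ℕ) : l.succHead.headI = l.headI + 1 := rfl

@[simp] lemma internalParts_succHead (l : List ℕ) :
    l.succHead.internalParts = l.internalParts := rfl

end List

def compositionBlocks (n : ℕ) : Finset (List ℕ) :=
  (univ : Finset (Composition n)).map ⟨Composition.blocks, fun _ _ => Composition.ext⟩

lemma mem_compositionBlocks {n : ℕ} {l : List ℕ} :
    l ∈ compositionBlocks n ↔ (∀ x ∈ l, 0 < x) ∧ l.sum = n := by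
  simp only [compositionBlocks, Finset.mem_map, mem_univ, true_and]
  exact ⟨fun ⟨c, hc⟩ => hc ▸ ⟨fun _ => c.blocks_pos, c.blocks_sum⟩,
    fun ⟨hpos, hsum⟩ => ⟨⟨l, hpos _, hsum⟩, rfl⟩⟩

lemma succHead_mem_compositionBlocks {n : ℕ} {l : List ℕ} (hl : l ∈ compositionBlocks n) :
    l.succHead ∈ compositionBlocks (n + 1) := by
  cases l <;> simp_all [mem_compositionBlocks] <;> omega

lemma injOn_succHead (n : ℕ) : Set.InjOn List.succHead (compositionBlocks n) := by
  rintro (_ | ⟨a, s⟩) hs (_ | ⟨b, t⟩) ht h <;> simp_all [mem_compositionBlocks]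

lemma exists_succHead_eq {n : ℕ} {t : List ℕ} (ht : t ∈ compositionBlocks (n + 1))
    (hhead : t.headI = 1 → t.tail = []) : ∃ m ∈ compositionBlocks n, m.succHead = t := by
  rw [mem_compositionBlocks] at ht
  obtain ⟨hpos, hsum⟩ := ht
  rcases t with _ | ⟨b, s⟩
  · simp at hsum
  have hb : 0 < b := hpos b (by simp)
  by_cases hb1 : b = 1
  · subst hb1
    obtain rfl : s = [] := hhead rfl
    exact ⟨[], by simp_all [mem_compositionBlocks], rfl⟩
  · refine ⟨(b - 1) :: s, ?_, by simp; omega⟩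
    simp_all [mem_compositionBlocks]
    omega

lemma cons_mem_compositionBlocks {n a : ℕ} {l : List ℕ} :
    a :: l ∈ compositionBlocks (n + a) ↔ 0 < a ∧ l ∈ compositionBlocks n := by
  simp only [mem_compositionBlocks, List.mem_cons, forall_eq_or_imp, List.sum_cons, and_assoc,
    add_comm n a, Nat.add_left_cancel_iff]

lemma headI_pos_of_mem_compositionBlocks {n : ℕ} {l : List ℕ}
    (hl : l ∈ compositionBlocks (n + 1)) : 0 < l.headI := by
  cases l <;> simp_all [mem_compositionBlocks]

lemma forall_mem_dropLast_succHead_iff {l : List ℕ} (hl : ∀ x ∈ l, 0 < x) :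
    (∀ x ∈ l.succHead.dropLast, 1 < x) ↔ ∀ x ∈ l.internalParts, 1 < x := by
  rcases l with _ | ⟨a, _ | ⟨b, t⟩⟩
  · simp [List.internalParts]
  · simp
  · have : 0 < a := hl a (by simp)
    simp [List.dropLast_cons_cons]
    omega

def internalGtOneBlocks (n : ℕ) : Finset (List ℕ) :=
  {l ∈ compositionBlocks n | ∀ x ∈ l.internalParts, 1 < x}

lemma mem_internalGtOneBlocks {n : ℕ} {l : List ℕ} :
    l ∈ internalGtOneBlocks n ↔
      l ∈ compositionBlocks n ∧ ∀ x ∈ l.internalParts, 1 < x :=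
  mem_filter

lemma card_filter_headI_ne_one (n : ℕ) :
    #{l ∈ internalGtOneBlocks (n + 2) | l.headI ≠ 1} = #(internalGtOneBlocks (n + 1)) := by
  symm
  apply card_nbij List.succHead
  · intro l hl
    simp only [mem_coe, mem_filter, mem_internalGtOneBlocks] at hl ⊢
    have := headI_pos_of_mem_compositionBlocks hl.1
    exact ⟨⟨succHead_mem_compositionBlocks hl.1, by simpa using hl.2⟩, by simp; omega⟩
  · exact (injOn_succHead _).mono fun l hl => (mem_filter.mp hl).1
  · intro t ht
    simp only [mem_coe, mem_filter, mem_internalGtOneBlocks] at ht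
    obtain ⟨⟨htC, htint⟩, hhead⟩ := ht
    obtain ⟨m, hm, rfl⟩ := exists_succHead_eq htC (absurd · hhead)
    exact ⟨m, mem_internalGtOneBlocks.mpr ⟨hm, by simpa using htint⟩, rfl⟩

lemma card_filter_headI_eq_one (n : ℕ) :
    #{l ∈ internalGtOneBlocks (n + 2) | l.headI = 1} = #(internalGtOneBlocks n) := by
  symm
  apply card_nbij (fun l => 1 :: l.succHead)
  · intro l hl
    simp only [mem_coe, mem_filter, mem_internalGtOneBlocks] at hl ⊢
    obtain ⟨hlC, hlint⟩ := hl
    have hC : 1 :: l.succHead ∈ compositionBlocks (n + 2) :=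
      cons_mem_compositionBlocks.mpr ⟨one_pos, succHead_mem_compositionBlocks hlC⟩
    refine ⟨⟨hC, ?_⟩, rfl⟩
    rw [List.internalParts_cons, forall_mem_dropLast_succHead_iff (mem_compositionBlocks.mp hlC).1]
    exact hlint
  · intro l hl l' hl' h
    exact injOn_succHead n (mem_filter.mp hl).1 (mem_filter.mp hl').1 (List.cons_injective h)
  · intro t ht
    simp only [mem_coe, mem_filter, mem_internalGtOneBlocks] at ht
    obtain ⟨⟨htC, htint⟩, hhead⟩ := ht
    rcases t with _ | ⟨_, s⟩
    · simp [mem_compositionBlocks] at htC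
    obtain rfl : _ = 1 := hhead
    rw [List.internalParts_cons] at htint
    have hsC : s ∈ compositionBlocks (n + 1) := by
      rw [show n + 2 = n + 1 + 1 from rfl, cons_mem_compositionBlocks] at htC
      exact htC.2
    have hshead : s.headI = 1 → s.tail = [] := by
      rcases s with _ | ⟨b, _ | ⟨c, u⟩⟩
      all_goals simp_all [List.dropLast_cons_cons]
      omega
    obtain ⟨m, hm, rfl⟩ := exists_succHead_eq hsC hshead
    refine ⟨m, mem_internalGtOneBlocks.mpr ⟨hm, ?_⟩, rfl⟩
    rwa [← forall_mem_dropLast_succHead_iff (mem_compositionBlocks.mp hm).1]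

lemma card_internalGtOneBlocks_add_two (n : ℕ) :
    #(internalGtOneBlocks (n + 2)) = #(internalGtOneBlocks (n + 1)) + #(internalGtOneBlocks n) := by
  rw [← card_filter_add_card_filter_not (fun l => l.headI ≠ 1), card_filter_headI_ne_one]
  simp only [not_not, card_filter_headI_eq_one]

lemma card_internalGtOneBlocks (n : ℕ) : #(internalGtOneBlocks n) = Nat.fib (n + 1) := by
  induction n using Nat.twoStepInduction with
  | zero => decide
  | one => decide
  | more n ih₀ ih₁ =>
    rw [card_internalGtOneBlocks_add_two, ih₀, ih₁, add_comm]
    exact (Nat.fib_add_two (n := n + 1)).symm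

lemma card_filter_compositionBlocks (n : ℕ) (p : List ℕ → Prop) [DecidablePred p] :
    #{l ∈ compositionBlocks n | p l} = Nat.card {c : Composition n // p c.blocks} := by
  rw [compositionBlocks, filter_map, card_map, Nat.card_eq_fintype_card, Fintype.card_subtype]
  rfl

/-- The number of compositions of `n` all of whose internal parts are greater
than `1` equals the Fibonacci number `F_{n+1}`. -/
theorem count_compositions_internal_gt_one (n : ℕ) :
    Nat.card {c : Composition n //
      ∀ i, 0 < i → i + 1 < c.length → 1 < c.blocks.getD i 0} = Nat.fib (n + 1) := by
  rw [← card_internalGtOneBlocks, internalGtOneBlocks, card_filter_compositionBlocks]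
  exact Nat.card_congr (Equiv.subtypeEquivRight fun _ => (List.forall_mem_internalParts_iff 0).symm)
end

section
/- For the path graph P_n with vertices 1,...,n, letting X be the set of odd vertices and Y the set of even vertices, one has F_{n+2} = Σ_{I ⊆ X independent} 2^{|Y \ N(I)|}, where N(I) is the set of vertices adjacent to some vertex of I. -/
/-!
Independent sets of the path `1 — 2 — ⋯ — n` are counted by `F_{n+2}`: those avoiding `n` are the
independent sets of the path on `n - 1` vertices, and those containing `n` avoid `n - 1`, so they
are the independent sets of the path on `n - 2` vertices with `n` added.
Group them by their odd part `I`, which can be any set of odd vertices. Given `I`, the even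
part can be any subset of the even vertices not adjacent to `I`, since two vertices of the same
parity are never adjacent.
-/

open Finset

def pathIndepSets (n : ℕ) : Finset (Finset ℕ) :=
  (Icc 1 n).powerset.filter fun S => ∀ v ∈ S, v + 1 ∉ S

lemma mem_pathIndepSets {n : ℕ} {S : Finset ℕ} :
    S ∈ pathIndepSets n ↔ S ⊆ Icc 1 n ∧ ∀ v ∈ S, v + 1 ∉ S := by
  rw [pathIndepSets, mem_filter, mem_powerset]

lemma filter_not_mem_pathIndepSets_succ (n : ℕ) :
    (pathIndepSets (n + 1)).filter (n + 1 ∉ ·) = pathIndepSets n := by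
  ext S
  simp only [mem_filter, mem_pathIndepSets, subset_iff, mem_Icc]
  constructor
  · rintro ⟨⟨hS, hind⟩, hn⟩
    refine ⟨fun v hv => ?_, hind⟩
    have := hS hv
    have : v ≠ n + 1 := by rintro rfl; exact hn hv
    omega
  · rintro ⟨hS, hind⟩
    exact ⟨⟨fun v hv => by have := hS hv; omega, hind⟩, fun h => by have := hS h; omega⟩

lemma filter_mem_pathIndepSets_add_two (n : ℕ) :
    (pathIndepSets (n + 2)).filter (n + 2 ∈ ·) = (pathIndepSets n).image (insert (n + 2)) := by
  ext S
  simp only [mem_filter, mem_image, mem_pathIndepSets, subset_iff, mem_Icc]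
  constructor
  · rintro ⟨⟨hS, hind⟩, hn⟩
    refine ⟨S.erase (n + 2), ⟨fun v hv => ?_, fun v hv hv' => ?_⟩, insert_erase hn⟩
    · obtain ⟨hne, hv⟩ := mem_erase.mp hv
      have := hS hv
      have : v ≠ n + 1 := by rintro rfl; exact hind _ hv hn
      omega
    · exact hind v (mem_of_mem_erase hv) (mem_of_mem_erase hv')
  · rintro ⟨T, ⟨hT, hind⟩, rfl⟩
    refine ⟨⟨fun v hv => ?_, fun v hv hv' => ?_⟩, mem_insert_self _ _⟩
    · rcases mem_insert.mp hv with rfl | hv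
      · omega
      · have := hT hv; omega
    · rcases mem_insert.mp hv with rfl | hv <;> rcases mem_insert.mp hv' with h | hv'
      · omega
      · have := hT hv'; omega
      · have := hT hv; omega
      · exact hind v hv hv'

theorem card_pathIndepSets (n : ℕ) : #(pathIndepSets n) = Nat.fib (n + 2) := by
  induction n using Nat.twoStepInduction with
  | zero => decide
  | one => decide
  | more n ih₀ ih₁ =>
    have hmax {S} (hS : S ∈ pathIndepSets n) : n + 2 ∉ S := fun h => by
      simpa using (mem_pathIndepSets.mp hS).1 h
    have hinj : Set.InjOn (insert (n + 2)) (pathIndepSets n : Set (Finset ℕ)) :=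
      fun S hS T hT hST => by rw [← erase_insert (hmax hS), ← erase_insert (hmax hT), hST]
    rw [← card_filter_add_card_filter_not (n + 2 ∈ ·), filter_mem_pathIndepSets_add_two,
      filter_not_mem_pathIndepSets_succ, card_image_of_injOn hinj, ih₀, ih₁,
      Nat.fib_add_two (n := n + 2)]

def unblockedEvens (n : ℕ) (I : Finset ℕ) : Finset ℕ :=
  ((Icc 1 n).filter Even).filter fun v => ¬(v + 1 ∈ I ∨ v - 1 ∈ I)

lemma union_mem_pathIndepSets_iff {n : ℕ} {I J : Finset ℕ} (hI : I ⊆ (Icc 1 n).filter Odd)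
    (hJ : J ⊆ (Icc 1 n).filter Even) :
    I ∪ J ∈ pathIndepSets n ↔ J ⊆ unblockedEvens n I := by
  simp only [subset_iff, mem_filter, mem_Icc, Nat.odd_iff, Nat.even_iff] at hI hJ
  rw [mem_pathIndepSets, union_subset_iff]
  simp only [unblockedEvens, subset_iff, mem_union, mem_filter, mem_Icc, Nat.even_iff]
  constructor
  · rintro ⟨-, hind⟩ w hw
    refine ⟨hJ hw, ?_⟩
    rintro (h | h)
    · exact hind w (Or.inr hw) (Or.inl h)
    · have := hJ hw
      exact hind (w - 1) (Or.inl h) (Or.inr (by rwa [Nat.sub_add_cancel (by omega)]))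
  · intro hfree
    refine ⟨⟨fun v hv => (hI hv).1, fun v hv => (hJ hv).1⟩, ?_⟩
    rintro v (hv | hv) (hv' | hv')
    · have := hI hv; have := hI hv'; omega
    · exact (hfree hv').2 (Or.inr (by simpa using hv))
    · exact (hfree hv).2 (Or.inl hv')
    · have := hJ hv; have := hJ hv'; omega

lemma filter_odd_union_filter_even (S : Finset ℕ) : S.filter Odd ∪ S.filter Even = S := by
  ext v
  simp only [mem_union, mem_filter, ← and_or_left, Nat.even_or_odd v |>.symm, and_true]

lemma filter_union_of_odd_of_even {I J : Finset ℕ} (hI : ∀ v ∈ I, Odd v)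
    (hJ : ∀ v ∈ J, Even v) :
    (I ∪ J).filter Odd = I ∧ (I ∪ J).filter Even = J := by
  rw [filter_union, filter_union, filter_true_of_mem hI, filter_true_of_mem hJ,
    filter_false_of_mem fun v hv => Nat.not_odd_iff_even.mpr (hJ v hv),
    filter_false_of_mem fun v hv => Nat.not_even_iff_odd.mpr (hI v hv), union_empty, empty_union]
  exact ⟨rfl, rfl⟩

lemma card_filter_pathIndepSets_odd_part {n : ℕ} {I : Finset ℕ}
    (hI : I ⊆ (Icc 1 n).filter Odd) :
    #((pathIndepSets n).filter (·.filter Odd = I)) = 2 ^ #(unblockedEvens n I) := by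
  have hIodd : ∀ v ∈ I, Odd v := fun v hv => (mem_filter.mp (hI hv)).2
  have hunion (J : Finset ℕ) (hJ : J ⊆ unblockedEvens n I) :=
    filter_union_of_odd_of_even hIodd fun v hv => (mem_filter.mp (mem_filter.mp (hJ hv)).1).2
  rw [← card_powerset]
  refine card_nbij' (·.filter Even) (I ∪ ·) (fun S hS => ?_) (fun J hJ => ?_) (fun S hS => ?_)
    (fun J hJ => (hunion J (mem_powerset.mp hJ)).2)
  · obtain ⟨hSindep, rfl⟩ := mem_filter.mp hS
    rw [mem_coe, mem_powerset, ← union_mem_pathIndepSets_iff hI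
      (filter_subset_filter _ (mem_pathIndepSets.mp hSindep).1), filter_odd_union_filter_even]
    exact hSindep
  · rw [mem_coe, mem_powerset] at hJ
    exact mem_filter.mpr ⟨(union_mem_pathIndepSets_iff hI
      (hJ.trans (filter_subset _ _))).mpr hJ, (hunion J hJ).1⟩
  · obtain ⟨-, rfl⟩ := mem_filter.mp hS
    exact filter_odd_union_filter_even S

/-- For the path graph `P_n` with vertices `1,...,n`, with `X` the odd vertices and
`Y` the even vertices, `F_{n+2} = Σ_{I ⊆ X} 2^{|Y \ N(I)|}`, where `N(I)` is the set
of vertices adjacent to some vertex of `I`. -/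
theorem fib_as_sum_of_powers_of_two (n : ℕ) :
    Nat.fib (n + 2) =
      ∑ I ∈ ((Finset.Icc 1 n).filter (fun v => Odd v)).powerset,
        2 ^ (((Finset.Icc 1 n).filter (fun v => Even v)).filter
              (fun v => ¬(v + 1 ∈ I ∨ v - 1 ∈ I))).card := by
  have hmaps : (pathIndepSets n : Set (Finset ℕ)).MapsTo (·.filter Odd)
      ((Icc 1 n).filter Odd).powerset := fun S hS =>
    mem_powerset.mpr (filter_subset_filter _ (mem_pathIndepSets.mp hS).1)
  rw [← card_pathIndepSets, card_eq_sum_card_fiberwise hmaps]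
  exact sum_congr rfl fun I hI => card_filter_pathIndepSets_odd_part (mem_powerset.mp hI)
end

section
/- Let F be a field and let H be the commutative F-algebra F[x_v : v ∈ V(G)] / (x_r^2 for r ∈ R; x_v^2 − x_v for v ∈ V(G)\R; x_u x_v for uv ∈ E(G)), where G is a finite simple graph and R ⊆ V(G). Then the monomials X_I = Π_{v∈I} x_v for independent sets I of G form an F-basis of H; in particular dim_F H = |I(G)|. -/
variable (F : Type*) [Field F] (V : Type*) [Fintype V] [DecidableEq V]

/-- `s` is an independent set of the simple graph `G`. -/
def IndepSet (G : SimpleGraph V) (s : Finset V) : Prop :=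
  ∀ u ∈ s, ∀ v ∈ s, ¬ G.Adj u v

open MvPolynomial in
/-- The ideal of relations: `x_r^2` for `r ∈ R`, `x_v^2 - x_v` for `v ∉ R`,
and `x_u x_v` for edges `uv`. -/
noncomputable def relIdeal (G : SimpleGraph V) (R : Finset V) : Ideal (MvPolynomial V F) :=
  Ideal.span ({p | ∃ r ∈ R, p = X r ^ 2} ∪
    {p | ∃ v, v ∉ R ∧ p = X v ^ 2 - X v} ∪
    {p | ∃ u v, G.Adj u v ∧ p = X u * X v})

/-- The commutative algebra `H(G,R)`. -/
noncomputable abbrev HGR (G : SimpleGraph V) (R : Finset V) : Type _ :=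
  MvPolynomial V F ⧸ relIdeal F V G R

/-!
The span of the `X_I` contains `1 = X_∅` and is stable under multiplication by every
generator `x_v`: by the relations, `X_I x_v` is `0` (if `v ∈ I ∩ R`, or if `I ∪ {v}` is not
independent), `X_I` (if `v ∈ I \ R`) or `X_{I ∪ {v}}`. Hence the `X_I` span `H(G,R)`.

For independence, send a monomial `x^e` to the independent set `supp e` if `e ≤ 1` on `R` and
`supp e` is independent, and to `0` otherwise. This linear map kills every multiple of every
relation, so it descends to `H(G,R)`, where it sends `X_I` to the basis vector `I`.
-/

open MvPolynomial Ideal.Quotient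

section

variable {R σ M : Type*} [CommSemiring R] [AddCommMonoid M] [Module R M]

theorem MvPolynomial.linearMap_mul_eq_zero_of_monomial (T : MvPolynomial σ R →ₗ[R] M)
    (g : MvPolynomial σ R) (h : ∀ e, T (monomial e 1 * g) = 0) (p : MvPolynomial σ R) :
    T (p * g) = 0 := by
  induction p using MvPolynomial.induction_on' with
  | monomial e a =>
    rw [show monomial e a = a • monomial e 1 by rw [smul_monomial, smul_eq_mul, mul_one],
      smul_mul_assoc, map_smul, h, smul_zero]
  | add p q hp hq => rw [add_mul, map_add, hp, hq, add_zero]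

theorem MvPolynomial.linearMap_eq_zero_of_mem_ideal_span (T : MvPolynomial σ R →ₗ[R] M)
    {s : Set (MvPolynomial σ R)} (h : ∀ g ∈ s, ∀ e, T (monomial e 1 * g) = 0)
    {q : MvPolynomial σ R} (hq : q ∈ Ideal.span s) : T q = 0 := by
  suffices ∀ p, T (p * q) = 0 by simpa using this 1
  induction hq using Submodule.span_induction with
  | mem g hg => exact linearMap_mul_eq_zero_of_monomial T g (h g hg)
  | zero => simp
  | add x y _ _ hx hy => intro p; rw [mul_add, map_add, hx p, hy p, add_zero]
  | smul a x _ hx => intro p; rw [smul_eq_mul, ← mul_assoc, hx]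

end

namespace HGR

omit [Fintype V] [DecidableEq V]

variable {F V} {G : SimpleGraph V} {R : Finset V}

theorem mk_X_sq_of_mem {r : V} (hr : r ∈ R) : mk (relIdeal F V G R) (X r) ^ 2 = 0 := by
  rw [← map_pow, eq_zero_iff_mem]
  exact Ideal.subset_span (Or.inl (Or.inl ⟨r, hr, rfl⟩))

theorem mk_X_sq_of_notMem {v : V} (hv : v ∉ R) :
    mk (relIdeal F V G R) (X v) ^ 2 = mk (relIdeal F V G R) (X v) := by
  rw [← sub_eq_zero, ← map_pow, ← map_sub, eq_zero_iff_mem]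
  exact Ideal.subset_span (Or.inl (Or.inr ⟨v, hv, rfl⟩))

theorem mk_X_mul_mk_X_of_adj {u v : V} (huv : G.Adj u v) :
    mk (relIdeal F V G R) (X u) * mk (relIdeal F V G R) (X v) = 0 := by
  rw [← map_mul, eq_zero_iff_mem]
  exact Ideal.subset_span (Or.inr ⟨u, v, huv, rfl⟩)

theorem prod_mk_X_eq_zero_of_not_indepSet {s : Finset V} (hs : ¬ IndepSet V G s) :
    ∏ v ∈ s, mk (relIdeal F V G R) (X v) = 0 := by
  classical
  simp only [IndepSet, not_forall, not_not] at hs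
  obtain ⟨u, hu, v, hv, huv⟩ := hs
  set x : V → HGR F V G R := fun w => mk (relIdeal F V G R) (X w)
  rw [← Finset.mul_prod_erase s x hu,
    ← Finset.mul_prod_erase (s.erase u) x (Finset.mem_erase.2 ⟨huv.ne.symm, hv⟩),
    ← mul_assoc, mk_X_mul_mk_X_of_adj huv, zero_mul]

theorem prod_mk_X_mul_mk_X_mem_span {I : Finset V} (hI : IndepSet V G I) (v : V) :
    (∏ w ∈ I, mk (relIdeal F V G R) (X w)) * mk (relIdeal F V G R) (X v) ∈
      Submodule.span F (Set.range (fun I : {s : Finset V // IndepSet V G s} =>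
        ∏ v ∈ I.1, mk (relIdeal F V G R) (X v))) := by
  classical
  set x : V → HGR F V G R := fun w => mk (relIdeal F V G R) (X w)
  by_cases hvI : v ∈ I
  · rw [← Finset.mul_prod_erase I x hvI, mul_comm (x v), mul_assoc, ← sq]
    by_cases hvR : v ∈ R
    · rw [mk_X_sq_of_mem hvR, mul_zero]
      exact zero_mem _
    · rw [mk_X_sq_of_notMem hvR, mul_comm, Finset.mul_prod_erase I x hvI]
      exact Submodule.subset_span ⟨⟨I, hI⟩, rfl⟩
  · rw [mul_comm, ← Finset.prod_insert (f := x) hvI]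
    by_cases hind : IndepSet V G (insert v I)
    · exact Submodule.subset_span ⟨⟨_, hind⟩, rfl⟩
    · rw [prod_mk_X_eq_zero_of_not_indepSet hind]
      exact zero_mem _

theorem span_prod_mk_X_eq_top :
    Submodule.span F (Set.range (fun I : {s : Finset V // IndepSet V G s} =>
      ∏ v ∈ I.1, mk (relIdeal F V G R) (X v))) = ⊤ := by
  set S := Submodule.span F (Set.range (fun I : {s : Finset V // IndepSet V G s} =>
      ∏ v ∈ I.1, mk (relIdeal F V G R) (X v)))
  have mul_mk_X_mem : ∀ v, ∀ y ∈ S, y * mk (relIdeal F V G R) (X v) ∈ S := fun v y hy =>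
    (Submodule.span_le (p := S.comap (LinearMap.mulRight F (mk (relIdeal F V G R) (X v)))) |>.2
      (by rintro _ ⟨I, rfl⟩; exact prod_mk_X_mul_mk_X_mem_span I.2 v)) hy
  have mk_mem : ∀ p, mk (relIdeal F V G R) p ∈ S := by
    intro p
    induction p using MvPolynomial.induction_on with
    | C a =>
      have hone : (1 : HGR F V G R) ∈ S :=
        Submodule.subset_span ⟨⟨∅, by simp [IndepSet]⟩, Finset.prod_empty⟩
      rw [← algebraMap_eq, mk_algebraMap, Algebra.algebraMap_eq_smul_one]
      exact S.smul_mem a hone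
    | add p q hp hq => rw [map_add]; exact S.add_mem hp hq
    | mul_X p v hp => rw [map_mul]; exact mul_mk_X_mem v _ hp
  exact Submodule.eq_top_iff'.2 fun h => by obtain ⟨p, rfl⟩ := mk_surjective h; exact mk_mem p

/-- `x^e` is nonzero in `H(G,R)` exactly when `e` survives, and then `x^e = X_{supp e}`. -/
def Survives (G : SimpleGraph V) (R : Finset V) (e : V →₀ ℕ) : Prop :=
  (∀ r ∈ R, e r ≤ 1) ∧ IndepSet V G e.support

variable (G R) in
open scoped Classical in
/-- The paper's action of `H(G,R)` on `F·I(G)`, applied to `∅` and pulled back to polynomials. -/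
noncomputable def normalForm : MvPolynomial V F →ₗ[F] Finset V →₀ F :=
  (basisMonomials V F).constr F fun e => if Survives G R e then Finsupp.single e.support 1 else 0

open scoped Classical in
theorem normalForm_monomial (e : V →₀ ℕ) :
    normalForm G R (monomial e (1 : F)) =
      if Survives G R e then Finsupp.single e.support 1 else 0 := by
  rw [show monomial e (1 : F) = basisMonomials V F e by rw [coe_basisMonomials], normalForm,
    Module.Basis.constr_basis]

theorem normalForm_monomial_of_not_survives {e : V →₀ ℕ} (he : ¬ Survives G R e) :
    normalForm G R (monomial e (1 : F)) = 0 := by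
  classical
  rw [normalForm_monomial, if_neg he]

theorem normalForm_monomial_congr {e e' : V →₀ ℕ} (hsupp : e.support = e'.support)
    (hR : ∀ r ∈ R, e r = e' r) :
    normalForm G R (monomial e (1 : F)) = normalForm G R (monomial e' 1) := by
  classical
  have hsurv : Survives G R e ↔ Survives G R e' := by
    rw [Survives, Survives, hsupp, forall₂_congr fun r hr => by rw [hR r hr]]
  rw [normalForm_monomial, normalForm_monomial, hsupp, if_congr hsurv rfl rfl]

theorem normalForm_eq_zero_of_mem {q : MvPolynomial V F} (hq : q ∈ relIdeal F V G R) :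
    normalForm G R q = 0 := by
  classical
  refine linearMap_eq_zero_of_mem_ideal_span _ ?_ hq
  rintro g ((⟨r, hr, rfl⟩ | ⟨v, hv, rfl⟩) | ⟨u, v, huv, rfl⟩) e
  · rw [X_pow_eq_monomial, monomial_mul, one_mul]
    refine normalForm_monomial_of_not_survives fun h => ?_
    simpa using h.1 r hr
  · rw [mul_sub, X_pow_eq_monomial, X, monomial_mul, monomial_mul, one_mul, map_sub,
      sub_eq_zero]
    refine normalForm_monomial_congr ?_ fun r hr => ?_
    · ext a
      by_cases hva : v = a <;> simp [hva]
    · simp [show v ≠ r by rintro rfl; exact hv hr]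
  · rw [X, X, monomial_mul, monomial_mul, one_mul, one_mul]
    refine normalForm_monomial_of_not_survives fun h => h.2 u ?_ v ?_ huv <;> simp

variable (G R) in
noncomputable def normalFormQuot : HGR F V G R →ₗ[F] Finset V →₀ F :=
  ((relIdeal F V G R).restrictScalars F).liftQ (normalForm G R)
      (fun _ hq => LinearMap.mem_ker.2 (normalForm_eq_zero_of_mem hq)) ∘ₗ
    (Submodule.Quotient.restrictScalarsEquiv F (relIdeal F V G R)).symm.toLinearMap

theorem normalFormQuot_mk (p : MvPolynomial V F) :
    normalFormQuot G R (mk (relIdeal F V G R) p) = normalForm G R p :=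
  rfl

theorem normalForm_prod_X {I : Finset V} (hI : IndepSet V G I) :
    normalForm G R (∏ v ∈ I, X v : MvPolynomial V F) = Finsupp.single I 1 := by
  classical
  have hsupp : (∑ v ∈ I, Finsupp.single v 1 : V →₀ ℕ).support = I := by
    ext a
    simp [Finsupp.finsetSum_apply, Finsupp.single_apply]
  have hsurv : Survives G R (∑ v ∈ I, Finsupp.single v 1) := by
    refine ⟨fun r _ => ?_, by rwa [hsupp]⟩
    simp only [Finsupp.finsetSum_apply, Finsupp.single_apply, Finset.sum_ite_eq']
    split_ifs <;> omega
  rw [show (∏ v ∈ I, X v : MvPolynomial V F) = ∏ v ∈ I, monomial (Finsupp.single v 1) 1 from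
    rfl, ← monomial_sum_one, normalForm_monomial, if_pos hsurv, hsupp]

theorem linearIndependent_prod_mk_X :
    LinearIndependent F (fun I : {s : Finset V // IndepSet V G s} =>
      ∏ v ∈ I.1, mk (relIdeal F V G R) (X v)) := by
  refine LinearIndependent.of_comp (normalFormQuot G R) ?_
  have hcomp : normalFormQuot G R ∘ (fun I : {s : Finset V // IndepSet V G s} =>
      ∏ v ∈ I.1, mk (relIdeal F V G R) (X v)) = fun I => Finsupp.single I.1 1 := by
    ext1 I
    rw [Function.comp_apply, ← map_prod, normalFormQuot_mk, normalForm_prod_X I.2]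
  rw [hcomp]
  exact (Finsupp.linearIndependent_single_one F (Finset V)).comp _ Subtype.val_injective

end HGR

/-- The monomials `X_I = Π_{v ∈ I} x_v`, for `I` ranging over the independent
sets of `G`, form an `F`-basis of `H(G,R)`; in particular
`dim_F H(G,R) = |I(G)|`. -/
theorem monomials_basis_of_HGR (G : SimpleGraph V) (R : Finset V) :
    LinearIndependent F (fun I : {s : Finset V // IndepSet V G s} =>
        ∏ v ∈ I.1, Ideal.Quotient.mk (relIdeal F V G R) (MvPolynomial.X v)) ∧
      Submodule.span F (Set.range (fun I : {s : Finset V // IndepSet V G s} =>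
        ∏ v ∈ I.1, Ideal.Quotient.mk (relIdeal F V G R) (MvPolynomial.X v))) = ⊤ ∧
      Module.finrank F (HGR F V G R) = Nat.card {s : Finset V // IndepSet V G s} := by
  have hli := HGR.linearIndependent_prod_mk_X (F := F) (G := G) (R := R)
  have hspan := HGR.span_prod_mk_X_eq_top (F := F) (G := G) (R := R)
  exact ⟨hli, hspan, Module.finrank_eq_nat_card_basis (Module.Basis.mk hli hspan.ge)⟩
end

section
/- Let H(G,R) be the algebra F[x_v : v ∈ V(G)]/(x_r^2, r∈R; x_v^2−x_v, v∉R; x_u x_v, uv∈E(G)). The elements e_I := (Π_{v∈I} x_v)·(Π_{u ∈ V(G)\R\I}(1−x_u)), for I ranging over independent sets of G−R, form a complete set of orthogonal idempotents summing to 1: e_I^2 = e_I, e_I e_J = 0 for I ≠ J, and Σ_I e_I = 1. -/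
/-!
With `S = V \ R`, every `x_v` for `v ∈ S` is idempotent. Expanding
`1 = ∏_{u ∈ S} (x_u + (1 - x_u))` writes `1` as the sum of the products
`∏_{v ∈ I} x_v · ∏_{u ∈ S \ I} (1 - x_u)` over all `I ⊆ S`; these are idempotent, and two
distinct ones are orthogonal since one contains `x_v` and the other `1 - x_v` for some `v`.
The edge relations `x_u x_v = 0` kill the terms indexed by non-independent sets.
-/
variable (F : Type*) [Field F] (V : Type*) [Fintype V] [DecidableEq V]

instance (G : SimpleGraph V) [DecidableRel G.Adj] (s : Finset V) :
    Decidable (IndepSet V G s) := by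
  unfold IndepSet; infer_instance

/-- The image of `x_v` in `H(G,R)`. -/
noncomputable def xQ (G : SimpleGraph V) (R : Finset V) (v : V) :
    MvPolynomial V F ⧸ relIdeal F V G R :=
  Ideal.Quotient.mk (relIdeal F V G R) (MvPolynomial.X v)

/-- The idempotent `e_I = X_I · Π_{u ∈ (V\R)\I} (1 - x_u)`. -/
noncomputable def eIdem (G : SimpleGraph V) (R : Finset V) (I : Finset V) :
    MvPolynomial V F ⧸ relIdeal F V G R :=
  (∏ v ∈ I, xQ F V G R v) * ∏ u ∈ (Finset.univ \ R) \ I, (1 - xQ F V G R u)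

theorem isIdempotentElem_finsetProd {ι M : Type*} [CommMonoid M] {f : ι → M} {s : Finset ι}
    (hf : ∀ i ∈ s, IsIdempotentElem (f i)) : IsIdempotentElem (∏ i ∈ s, f i) :=
  Finset.prod_induction f IsIdempotentElem (fun _ _ => IsIdempotentElem.mul)
    IsIdempotentElem.one hf

section CommRing

variable {ι A : Type*} [CommRing A] [DecidableEq ι]

/-- The atom of the Boolean algebra generated by the `x u`, `u ∈ S`, in which exactly
the `x v` with `v ∈ I` occur positively. -/
def atomIdem (x : ι → A) (S I : Finset ι) : A :=
  (∏ v ∈ I, x v) * ∏ u ∈ S \ I, (1 - x u)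

theorem sum_powerset_atomIdem (x : ι → A) (S : Finset ι) :
    ∑ I ∈ S.powerset, atomIdem x S I = 1 := by
  simpa [atomIdem] using (Finset.prod_add x (fun u => 1 - x u) S).symm

variable {x : ι → A} {S : Finset ι}

theorem isIdempotentElem_atomIdem (hx : ∀ v ∈ S, IsIdempotentElem (x v)) {I : Finset ι}
    (hI : I ⊆ S) : IsIdempotentElem (atomIdem x S I) :=
  (isIdempotentElem_finsetProd fun v hv => hx v (hI hv)).mul
    (isIdempotentElem_finsetProd fun u hu => (hx u (Finset.mem_sdiff.1 hu).1).one_sub)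

theorem atomIdem_mul_atomIdem_of_mem_of_notMem (hx : ∀ v ∈ S, IsIdempotentElem (x v))
    {I J : Finset ι} (hI : I ⊆ S) {v : ι} (hvI : v ∈ I) (hvJ : v ∉ J) :
    atomIdem x S I * atomIdem x S J = 0 := by
  have hvSJ : v ∈ S \ J := Finset.mem_sdiff.2 ⟨hI hvI, hvJ⟩
  have hv : x v * (1 - x v) = 0 := (hx v (hI hvI)).mul_one_sub_self
  rw [atomIdem, atomIdem, ← Finset.mul_prod_erase _ _ hvI, ← Finset.mul_prod_erase _ _ hvSJ]
  linear_combination ((∏ u ∈ I.erase v, x u) * (∏ u ∈ S \ I, (1 - x u)) *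
    (∏ u ∈ J, x u) * ∏ u ∈ (S \ J).erase v, (1 - x u)) * hv

theorem atomIdem_mul_atomIdem_of_ne (hx : ∀ v ∈ S, IsIdempotentElem (x v))
    {I J : Finset ι} (hI : I ⊆ S) (hJ : J ⊆ S) (hIJ : I ≠ J) :
    atomIdem x S I * atomIdem x S J = 0 := by
  by_cases hsub : I ⊆ J
  · obtain ⟨v, hvJ, hvI⟩ := Finset.exists_of_ssubset (hsub.ssubset_of_ne hIJ)
    rw [mul_comm]
    exact atomIdem_mul_atomIdem_of_mem_of_notMem hx hJ hvJ hvI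
  · obtain ⟨v, hvI, hvJ⟩ := Finset.not_subset.1 hsub
    exact atomIdem_mul_atomIdem_of_mem_of_notMem hx hI hvI hvJ

end CommRing

variable {V} in
omit [Fintype V] in
theorem prod_eq_zero_of_not_indepSet {M : Type*} [CommMonoidWithZero M] {G : SimpleGraph V}
    {x : V → M}
    (hx : ∀ u v, G.Adj u v → x u * x v = 0) {I : Finset V} (hI : ¬ IndepSet V G I) :
    ∏ v ∈ I, x v = 0 := by
  simp only [IndepSet, not_forall, not_not] at hI
  obtain ⟨u, hu, v, hv, huv⟩ := hI
  rw [← Finset.mul_prod_erase _ _ hu,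
    ← Finset.mul_prod_erase _ _ (Finset.mem_erase.2 ⟨huv.ne.symm, hv⟩), ← mul_assoc,
    hx u v huv, zero_mul]

section Quotient

variable {V} (G : SimpleGraph V) (R : Finset V)

omit [Fintype V] [DecidableEq V] in
theorem isIdempotentElem_xQ {v : V} (hv : v ∉ R) : IsIdempotentElem (xQ F V G R v) := by
  have h : MvPolynomial.X v ^ 2 - MvPolynomial.X v ∈ relIdeal F V G R :=
    Ideal.subset_span (Or.inl (Or.inr ⟨v, hv, rfl⟩))
  rw [← Ideal.Quotient.eq_zero_iff_mem, map_sub, map_pow, sub_eq_zero] at h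
  exact (sq _).symm.trans h

omit [Fintype V] [DecidableEq V] in
theorem xQ_mul_xQ_of_adj {u v : V} (h : G.Adj u v) : xQ F V G R u * xQ F V G R v = 0 := by
  rw [xQ, xQ, ← map_mul, Ideal.Quotient.eq_zero_iff_mem]
  exact Ideal.subset_span (Or.inr ⟨u, v, h, rfl⟩)

theorem eIdem_eq_atomIdem (I : Finset V) :
    eIdem F V G R I = atomIdem (xQ F V G R) (Finset.univ \ R) I := rfl

end Quotient

/-- The elements `e_I`, for `I` ranging over the independent sets of `G−R`,
form a complete set of orthogonal idempotents of `H(G,R)` summing to `1`. -/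
theorem eIdem_complete_orthogonal_idempotents
    (G : SimpleGraph V) [DecidableRel G.Adj] (R : Finset V) :
    (∀ I ∈ (Finset.univ \ R).powerset.filter (fun s => IndepSet V G s),
        eIdem F V G R I * eIdem F V G R I = eIdem F V G R I) ∧
      (∀ I ∈ (Finset.univ \ R).powerset.filter (fun s => IndepSet V G s),
        ∀ J ∈ (Finset.univ \ R).powerset.filter (fun s => IndepSet V G s),
          I ≠ J → eIdem F V G R I * eIdem F V G R J = 0) ∧
      ∑ I ∈ (Finset.univ \ R).powerset.filter (fun s => IndepSet V G s),
        eIdem F V G R I = 1 := by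
  have hx : ∀ v ∈ Finset.univ \ R, IsIdempotentElem (xQ F V G R v) := fun v hv =>
    isIdempotentElem_xQ F G R (Finset.mem_sdiff.1 hv).2
  simp only [eIdem_eq_atomIdem, Finset.mem_filter, Finset.mem_powerset]
  refine ⟨fun I hI => isIdempotentElem_atomIdem hx hI.1,
    fun I hI J hJ hIJ => atomIdem_mul_atomIdem_of_ne hx hI.1 hJ.1 hIJ, ?_⟩
  rw [← sum_powerset_atomIdem (xQ F V G R) (Finset.univ \ R)]
  refine Finset.sum_subset (Finset.filter_subset _ _) fun I hI hnI => ?_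
  have hnIndep : ¬ IndepSet V G I := fun h => hnI (Finset.mem_filter.2 ⟨hI, h⟩)
  rw [atomIdem, prod_eq_zero_of_not_indepSet (fun _ _ => xQ_mul_xQ_of_adj F G R) hnIndep,
    zero_mul]
end

section
/- In the algebra H(G,R) = F[x_v : v∈V(G)]/(x_r^2, r∈R; x_v^2−x_v, v∉R; x_u x_v, uv∈E(G)), the Jacobson radical equals the ideal generated by {x_r : r ∈ R}; in particular H(G,R) is semisimple if and only if R = ∅. -/
variable (F : Type*) [Field F] (V : Type*) [Fintype V] [DecidableEq V]

/-!
Modulo an ideal `K ⊇ (x_v ^ 2 - x_v)`, every polynomial agrees with its interpolant on the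
Boolean cube, `f ≡ ∑_I f(χ_I) δ_I`, and `δ_I ∈ K` unless `K` vanishes at `χ_I`. Hence such a `K`
is the intersection of the maximal ideals `ker (eval χ_I)` containing it, i.e. its own Jacobson
radical, and `F[x]/K` is finite-dimensional. The ideal `L = relIdeal + (x_r : r ∈ R)` is of this
kind and lies between `relIdeal` and its radical (as `x_r ^ 2 ∈ relIdeal`), so
`jacobson relIdeal = L`. For `R = ∅` the quotient is Artinian with zero radical, hence
semisimple; for `r ∈ R`, sending `x_r` to the dual number `ε` and the other variables to `0`
shows `x_r ≠ 0` in `H(G,R)`.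
-/

namespace MvPolynomial

section BooleanCube

variable {F V}

noncomputable def charVec (I : Finset V) : V → F := fun v => if v ∈ I then 1 else 0

noncomputable def indicatorPoly (I : Finset V) : MvPolynomial V F :=
  (∏ v ∈ I, X v) * ∏ v ∈ Iᶜ, (1 - X v)

theorem sum_indicatorPoly : ∑ I : Finset V, (indicatorPoly I : MvPolynomial V F) = 1 := by
  have h1 : ∏ v : V, (X v + (1 - X v) : MvPolynomial V F) = 1 := by simp
  rw [← h1, Finset.prod_add, Finset.powerset_univ]
  simp only [indicatorPoly, Finset.compl_eq_univ_sdiff]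

variable {K : Ideal (MvPolynomial V F)}

theorem X_mul_indicatorPoly_sub_mem (hK : ∀ v, X v ^ 2 - X v ∈ K) (v : V) (I : Finset V) :
    X v * indicatorPoly I - C (charVec I v) * indicatorPoly I ∈ K := by
  by_cases hv : v ∈ I
  · rw [indicatorPoly, ← Finset.mul_prod_erase _ _ hv]
    convert K.mul_mem_right ((∏ w ∈ I.erase v, X w) * ∏ w ∈ Iᶜ, (1 - X w)) (hK v) using 1
    simp only [charVec, if_pos hv, map_one]
    ring
  · rw [indicatorPoly, ← Finset.mul_prod_erase _ _ (Finset.mem_compl.2 hv)]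
    convert K.mul_mem_right ((∏ w ∈ I, X w) * ∏ w ∈ Iᶜ.erase v, (1 - X w)) (K.neg_mem (hK v))
      using 1
    simp only [charVec, if_neg hv, map_zero]
    ring

theorem mul_indicatorPoly_sub_mem (hK : ∀ v, X v ^ 2 - X v ∈ K) (f : MvPolynomial V F)
    (I : Finset V) : f * indicatorPoly I - C (eval (charVec I) f) * indicatorPoly I ∈ K := by
  induction f using MvPolynomial.induction_on with
  | C a => simp
  | add p q hp hq => simpa only [map_add, add_mul, add_sub_add_comm] using K.add_mem hp hq
  | mul_X p v hp =>
    have := K.add_mem (K.mul_mem_left (X v) hp)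
      (K.mul_mem_left (C (eval (charVec I) p)) (X_mul_indicatorPoly_sub_mem hK v I))
    convert this using 1
    simp only [eval_X, map_mul]
    ring

theorem sub_sum_indicatorPoly_mem (hK : ∀ v, X v ^ 2 - X v ∈ K) (f : MvPolynomial V F) :
    f - ∑ I, C (eval (charVec I) f) * indicatorPoly I ∈ K := by
  have hf : f = ∑ I, f * indicatorPoly I := by rw [← Finset.mul_sum, sum_indicatorPoly, mul_one]
  rw [hf, ← Finset.sum_sub_distrib, ← hf]
  exact K.sum_mem fun I _ => mul_indicatorPoly_sub_mem hK f I

theorem indicatorPoly_mem_of_not_le_ker (hK : ∀ v, X v ^ 2 - X v ∈ K) {I : Finset V}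
    (hI : ¬ K ≤ RingHom.ker (eval (charVec I))) : indicatorPoly I ∈ K := by
  obtain ⟨g, hgK, hg⟩ := SetLike.not_le_iff_exists.1 hI
  have hC := K.sub_mem (K.mul_mem_right (indicatorPoly I) hgK) (mul_indicatorPoly_sub_mem hK g I)
  rw [sub_sub_cancel] at hC
  simpa [← mul_assoc, ← C_mul, inv_mul_cancel₀ hg] using
    K.mul_mem_left (C (eval (charVec I) g)⁻¹) hC

theorem mem_of_forall_eval_charVec_eq_zero (hK : ∀ v, X v ^ 2 - X v ∈ K) {f : MvPolynomial V F}
    (hf : ∀ I, K ≤ RingHom.ker (eval (charVec I)) → eval (charVec I) f = 0) : f ∈ K := by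
  refine (K.sub_mem_iff_left (K.sum_mem fun I _ => ?_)).1 (sub_sum_indicatorPoly_mem hK f)
  by_cases hI : K ≤ RingHom.ker (eval (charVec I))
  · simp [hf I hI]
  · exact K.mul_mem_left _ (indicatorPoly_mem_of_not_le_ker hK hI)

theorem jacobson_eq_self_of_X_sq_sub_X_mem (hK : ∀ v, X v ^ 2 - X v ∈ K) : K.jacobson = K := by
  refine le_antisymm (fun f hf => mem_of_forall_eval_charVec_eq_zero hK fun I hI => ?_)
    Ideal.le_jacobson
  have hmax := RingHom.ker_isMaximal_of_surjective (eval (charVec I) : MvPolynomial V F →+* F)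
    fun a => ⟨C a, eval_C a⟩
  exact Ideal.mem_sInf.1 hf ⟨hI, hmax⟩

theorem finite_quotient_of_X_sq_sub_X_mem (hK : ∀ v, X v ^ 2 - X v ∈ K) :
    Module.Finite F (MvPolynomial V F ⧸ K) := by
  refine Module.Finite.of_surjective
    (Fintype.linearCombination F fun I => Ideal.Quotient.mkₐ F K (indicatorPoly I)) ?_
  intro a
  obtain ⟨f, rfl⟩ := Ideal.Quotient.mkₐ_surjective F K a
  refine ⟨fun I => eval (charVec I) f, ?_⟩
  calc _ = Ideal.Quotient.mkₐ F K (∑ I, C (eval (charVec I) f) * indicatorPoly I) := by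
        simp only [Fintype.linearCombination_apply, map_sum, ← smul_eq_C_mul, map_smul]
    _ = Ideal.Quotient.mkₐ F K f :=
        Ideal.Quotient.eq.2 (K.neg_mem_iff.1 (by simpa using sub_sum_indicatorPoly_mem hK f))

end BooleanCube

end MvPolynomial

section HGR

set_option linter.unusedSectionVars false

open MvPolynomial

variable (G : SimpleGraph V) (R : Finset V)

theorem X_sq_mem_relIdeal {r : V} (hr : r ∈ R) :
    (X r ^ 2 : MvPolynomial V F) ∈ relIdeal F V G R :=
  Ideal.subset_span (Or.inl (Or.inl ⟨r, hr, rfl⟩))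

theorem X_sq_sub_X_mem_relIdeal {v : V} (hv : v ∉ R) :
    (X v ^ 2 - X v : MvPolynomial V F) ∈ relIdeal F V G R :=
  Ideal.subset_span (Or.inl (Or.inr ⟨v, hv, rfl⟩))

theorem jacobson_relIdeal :
    (relIdeal F V G R).jacobson = relIdeal F V G R ⊔ Ideal.span (X '' (R : Set V)) := by
  set L := relIdeal F V G R ⊔ Ideal.span (X '' (R : Set V))
  have hX : ∀ r ∈ R, (X r : MvPolynomial V F) ∈ L := fun r hr =>
    Ideal.mem_sup_right (Ideal.subset_span ⟨r, hr, rfl⟩)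
  have hL : ∀ v, (X v ^ 2 - X v : MvPolynomial V F) ∈ L := by
    intro v
    by_cases hv : v ∈ R
    · exact L.sub_mem (L.pow_mem_of_mem (hX v hv) 2 two_pos) (hX v hv)
    · exact Ideal.mem_sup_left (X_sq_sub_X_mem_relIdeal F V G R hv)
  have hL_le_radical : L ≤ (relIdeal F V G R).radical := by
    refine sup_le Ideal.le_radical (Ideal.span_le.2 ?_)
    rintro _ ⟨r, hr, rfl⟩
    exact ⟨2, X_sq_mem_relIdeal F V G R hr⟩
  refine le_antisymm ?_ (hL_le_radical.trans Ideal.radical_le_jacobson)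
  exact (Ideal.jacobson_mono le_sup_left).trans (jacobson_eq_self_of_X_sq_sub_X_mem hL).le

theorem jacobson_bot_quotient_relIdeal :
    (⊥ : Ideal (MvPolynomial V F ⧸ relIdeal F V G R)).jacobson =
      Ideal.span ((fun r => Ideal.Quotient.mk (relIdeal F V G R) (X r)) '' (R : Set V)) := by
  rw [← Ideal.map_quotient_self (relIdeal F V G R),
    ← Ideal.map_jacobson_of_surjective Ideal.Quotient.mk_surjective (Ideal.mk_ker).le,
    jacobson_relIdeal, Ideal.map_sup, Ideal.map_quotient_self, bot_sup_eq, Ideal.map_span,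
    Set.image_image]

theorem relIdeal_le_ker_aeval {A : Type*} [CommRing A] [Algebra F A] (x : V → A)
    (hR : ∀ r ∈ R, x r ^ 2 = 0) (hnR : ∀ v ∉ R, x v ^ 2 = x v)
    (hG : ∀ u v, G.Adj u v → x u * x v = 0) :
    relIdeal F V G R ≤ RingHom.ker (aeval x) := by
  rw [relIdeal, Ideal.span_le]
  rintro _ ((⟨r, hr, rfl⟩ | ⟨v, hv, rfl⟩) | ⟨u, v, huv, rfl⟩)
  · simp [hR r hr]
  · simp [hnR v hv]
  · simp [hG u v huv]

theorem X_notMem_relIdeal {r : V} (hr : r ∈ R) :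
    (X r : MvPolynomial V F) ∉ relIdeal F V G R := by
  let x : V → DualNumber F := Pi.single r DualNumber.eps
  have hx : ∀ v ≠ r, x v = 0 := fun v hv => Pi.single_eq_of_ne hv _
  have hR : ∀ s ∈ R, x s ^ 2 = 0 := by
    intro s _
    by_cases hs : s = r
    · simp [x, hs, sq, DualNumber.eps_mul_eps]
    · simp [hx s hs]
  have hnR : ∀ v ∉ R, x v ^ 2 = x v := fun v hv => by
    simp [hx v (fun h => hv (h ▸ hr))]
  have hG : ∀ u v, G.Adj u v → x u * x v = 0 := by
    intro u v huv
    by_cases hu : u = r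
    · rw [hx v (fun hv => huv.ne (hu.trans hv.symm)), mul_zero]
    · rw [hx u hu, zero_mul]
  intro hmem
  have h := relIdeal_le_ker_aeval F V G R x hR hnR hG hmem
  rw [RingHom.mem_ker, aeval_X] at h
  simpa [x] using congrArg TrivSqZeroExt.snd h

end HGR

/-- The Jacobson radical of `H(G,R)` is the ideal generated by `{x_r : r ∈ R}`;
in particular `H(G,R)` is semisimple if and only if `R = ∅`. -/
theorem jacobson_radical_of_HGR (G : SimpleGraph V) (R : Finset V) :
    (⊥ : Ideal (MvPolynomial V F ⧸ relIdeal F V G R)).jacobson =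
        Ideal.span ((fun r => Ideal.Quotient.mk (relIdeal F V G R) (MvPolynomial.X r)) ''
          (R : Set V)) ∧
      (IsSemisimpleRing (MvPolynomial V F ⧸ relIdeal F V G R) ↔ R = ∅) := by
  have hjac := jacobson_bot_quotient_relIdeal F V G R
  refine ⟨hjac, ⟨fun _ => ?_, ?_⟩⟩
  · rw [Ideal.jacobson_bot, IsSemisimpleRing.jacobson_eq_bot] at hjac
    refine Finset.eq_empty_of_forall_notMem fun r hr => X_notMem_relIdeal F V G R hr ?_
    rw [← Ideal.Quotient.eq_zero_iff_mem, ← Ideal.mem_bot, hjac]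
    exact Ideal.subset_span ⟨r, hr, rfl⟩
  · rintro rfl
    have := MvPolynomial.finite_quotient_of_X_sq_sub_X_mem fun v =>
      X_sq_sub_X_mem_relIdeal F V G ∅ (Finset.notMem_empty v)
    have := IsArtinianRing.of_finite F (MvPolynomial V F ⧸ relIdeal F V G ∅)
    rw [IsArtinianRing.isSemisimpleRing_iff_jacobson, ← Ideal.jacobson_bot, hjac]
    simp
end

section
/- Let F be a field and let A be the F-algebra generated by T_s, T_t subject to T_s^2 = T_s, (T_t − 1)(T_t + q) = 0 with q ∈ F, q ≠ 0, and the braid relation T_s T_t T_s = T_t T_s T_t. Then T_s T_t = T_t T_s = T_s; in particular A is commutative. -/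
/-!
Since `q` is a unit, the quadratic relation makes `T_t` invertible: `T_t (T_t + q - 1) = q`.
The braid relation and `T_s² = T_s` give `T_t (T_s T_t T_s) = T_s T_t T_s = T_t (T_s T_t)`, so cancelling
`T_t` on the left yields `T_s T_t T_s = T_s T_t`; cancelling it on the right in
`(T_t T_s) T_t = T_s T_t T_s = T_s T_t` yields `T_t T_s = T_s`, and then `T_s T_t = T_s (T_t T_s) = T_s`.
-/

theorem isUnit_of_sub_one_mul_add_algebraMap_eq_zero {R A : Type*} [CommRing R] [Ring A]
    [Algebra R A] {t : A} {q : R} (hq : IsUnit q) (ht : (t - 1) * (t + algebraMap R A q) = 0) :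
    IsUnit t := by
  have hmul : t * (t + algebraMap R A (q - 1)) = algebraMap R A q := by
    rw [← sub_eq_zero, ← ht, map_sub, map_one]
    noncomm_ring
  have hcomm : Commute t (t + algebraMap R A (q - 1)) :=
    (Commute.refl t).add_right (Algebra.commutes _ t).symm
  exact (hcomm.isUnit_mul_iff.mp (hmul ▸ hq.map _)).1

section Braid

variable {M : Type*} [Monoid M] {s t : M}

theorem mul_mul_eq_mul_of_braid (ht : IsUnit t) (hs : s * s = s) (hb : s * t * s = t * s * t) :
    s * t * s = s * t := by
  refine ht.mul_left_cancel ?_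
  calc t * (s * t * s) = t * s * t * s := by simp only [mul_assoc]
    _ = s * t * (s * s) := by rw [← hb, mul_assoc]
    _ = t * (s * t) := by rw [hs, ← mul_assoc, hb]

theorem mul_eq_right_of_braid (ht : IsUnit t) (hs : s * s = s) (hb : s * t * s = t * s * t) :
    t * s = s :=
  ht.mul_right_cancel (by rw [← hb, mul_mul_eq_mul_of_braid ht hs hb])

theorem mul_eq_left_of_braid (ht : IsUnit t) (hs : s * s = s) (hb : s * t * s = t * s * t) :
    s * t = s := by
  rw [← mul_mul_eq_mul_of_braid ht hs hb, mul_assoc, mul_eq_right_of_braid ht hs hb, hs]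

end Braid

/-- If `T_s, T_t` are elements of an `F`-algebra with `T_s² = T_s`,
`(T_t − 1)(T_t + q) = 0` for some `q ≠ 0`, and the braid relation
`T_s T_t T_s = T_t T_s T_t`, then `T_s T_t = T_t T_s = T_s`. -/
theorem hecke_zero_nonzero_commute (F : Type*) [Field F] (A : Type*) [Ring A] [Algebra F A]
    (Ts Tt : A) (q : F) (hq : q ≠ 0)
    (hs : Ts * Ts = Ts)
    (ht : (Tt - 1) * (Tt + algebraMap F A q) = 0)
    (hbraid : Ts * Tt * Ts = Tt * Ts * Tt) :
    Ts * Tt = Tt * Ts ∧ Tt * Ts = Ts := by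
  have hTt : IsUnit Tt := isUnit_of_sub_one_mul_add_algebraMap_eq_zero hq.isUnit ht
  have hright : Tt * Ts = Ts := mul_eq_right_of_braid hTt hs hbraid
  exact ⟨(mul_eq_left_of_braid hTt hs hbraid).trans hright.symm, hright⟩
end

section
/- Let F be a field and m ≥ 3 an odd integer. Let A be the F-algebra generated by T_s, T_t with relations T_s^2 = T_s, (T_t−1)(T_t+q) = 0 for some nonzero q ∈ F, and the braid relation (T_s T_t T_s ⋯)_m = (T_t T_s T_t ⋯)_m (alternating products of m factors). Then dim_F A = 2m − 3, with basis consisting of the alternating products (T_s T_t T_s⋯)_k and (T_t T_s T_t⋯)_k for k = 0, 1, ..., m−2 (the two products for k=0 both being 1). -/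
/-!
`T_t` is invertible since `q ≠ 0`. With `T_s` idempotent, the common value `B` of the two sides of
the braid relation of odd length `m` absorbs `T_t` on both sides, and cancelling `T_t` gives
`(T_s T_t ⋯)_(m-2) = (T_s T_t ⋯)_(m-1) = (T_t T_s ⋯)_(m-1) = B`. So the span of the `2m - 3`
alternating words of length at most `m - 2` contains `1` and is stable under left multiplication
by both generators, hence is the whole algebra.

Conversely, the action of `T_s` and `T_t` on these words that the relations force defines a
representation on `F^(2m-3)`: the braid relation holds there because `(T_s T_t)^((m-1)/2)` sends
every basis vector to the top word. Applying it to the empty word sends the `2m - 3` words to the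
standard basis, so they are linearly independent.
-/

/-- The alternating product `(a b a ⋯)` with `n` factors, starting with `a`. -/
def altProd {A : Type*} [Monoid A] (a b : A) (n : ℕ) : A :=
  ((List.range n).map (fun i => if Even i then a else b)).prod

/-- The relations presenting the Hecke algebra with parameters `(0, q)` on an odd
bond of weight `m`: generator `true` is `T_s`, generator `false` is `T_t`. -/
inductive HeckeRel (F : Type*) [Field F] (q : F) (m : ℕ) :
    FreeAlgebra F Bool → FreeAlgebra F Bool → Prop
  | quad_s : HeckeRel F q m (FreeAlgebra.ι F true * FreeAlgebra.ι F true) (FreeAlgebra.ι F true)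
  | quad_t : HeckeRel F q m
      ((FreeAlgebra.ι F false - 1) * (FreeAlgebra.ι F false + algebraMap F (FreeAlgebra F Bool) q)) 0
  | braid : HeckeRel F q m (altProd (FreeAlgebra.ι F true) (FreeAlgebra.ι F false) m)
      (altProd (FreeAlgebra.ι F false) (FreeAlgebra.ι F true) m)

/-- The presented algebra `A = ⟨T_s, T_t⟩`. -/
abbrev HeckeAlg (F : Type*) [Field F] (q : F) (m : ℕ) : Type _ := RingQuot (HeckeRel F q m)

/-- The generator `T_s` of `HeckeAlg`. -/
noncomputable def Tsgen (F : Type*) [Field F] (q : F) (m : ℕ) : HeckeAlg F q m :=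
  RingQuot.mkAlgHom F (HeckeRel F q m) (FreeAlgebra.ι F true)

/-- The generator `T_t` of `HeckeAlg`. -/
noncomputable def Ttgen (F : Type*) [Field F] (q : F) (m : ℕ) : HeckeAlg F q m :=
  RingQuot.mkAlgHom F (HeckeRel F q m) (FreeAlgebra.ι F false)

/-- The set `{(T_s T_t ⋯)_k, (T_t T_s ⋯)_k : 0 ≤ k ≤ m-2}`. -/
def altSet (F : Type*) [Field F] (q : F) (m : ℕ) : Set (HeckeAlg F q m) :=
  {x | ∃ k ≤ m - 2, x = altProd (Tsgen F q m) (Ttgen F q m) k ∨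
    x = altProd (Ttgen F q m) (Tsgen F q m) k}

section AltProd

variable {M : Type*} [Monoid M] (a b : M)

@[simp] lemma altProd_zero : altProd a b 0 = 1 := rfl

@[simp] lemma altProd_one : altProd a b 1 = a := by simp [altProd]

lemma altProd_succ_right (k : ℕ) :
    altProd a b (k + 1) = altProd a b k * if Even k then a else b := by
  simp [altProd, List.range_succ]

lemma altProd_succ_right_of_even {k : ℕ} (hk : Even k) :
    altProd a b (k + 1) = altProd a b k * a := by
  rw [altProd_succ_right, if_pos hk]

lemma altProd_succ_right_of_odd {k : ℕ} (hk : Odd k) :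
    altProd a b (k + 1) = altProd a b k * b := by
  rw [altProd_succ_right, if_neg (Nat.not_even_iff_odd.mpr hk)]

lemma altProd_succ_left (k : ℕ) : altProd a b (k + 1) = a * altProd b a k := by
  induction k with
  | zero => simp [altProd]
  | succ k ih =>
    rw [altProd_succ_right, ih, altProd_succ_right, mul_assoc]
    by_cases hk : Even k <;> simp [hk, Nat.even_add_one]

lemma altProd_add_two (k : ℕ) : altProd a b (k + 2) = a * b * altProd a b k := by
  rw [altProd_succ_left, altProd_succ_left, mul_assoc]

lemma altProd_two_mul (j : ℕ) : altProd a b (2 * j) = (a * b) ^ j := by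
  induction j with
  | zero => simp
  | succ j ih => rw [mul_add_one, altProd_add_two, ih, pow_succ']

lemma altProd_two_mul_add_one (j : ℕ) : altProd a b (2 * j + 1) = (a * b) ^ j * a := by
  rw [altProd_succ_right_of_even a b (even_two_mul j), altProd_two_mul]

lemma altProd_two_mul_add_one_swap (j : ℕ) : altProd b a (2 * j + 1) = b * (a * b) ^ j := by
  rw [altProd_succ_left, altProd_two_mul]

lemma map_altProd {N G : Type*} [Monoid N] [FunLike G M N] [MonoidHomClass G M N] (f : G)
    (k : ℕ) : f (altProd a b k) = altProd (f a) (f b) k := by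
  induction k with
  | zero => simp
  | succ k ih => rw [altProd_succ_right, map_mul, ih, altProd_succ_right, apply_ite f]

lemma altProd_succ_eq_of_braid {s t : M} (hs : s * s = s) (ht : IsUnit t) {n : ℕ} (hn : Odd n)
    (hb : altProd s t (n + 2) = altProd t s (n + 2)) :
    altProd s t (n + 1) = altProd s t n ∧ altProd t s (n + 1) = altProd s t n := by
  have hn1 : Even (n + 1) := hn.add_one
  have hn2 : Odd (n + 2) := hn1.add_one
  have e1 : altProd s t (n + 2) = altProd s t (n + 1) * s := altProd_succ_right_of_even s t hn1
  have e2 : altProd t s (n + 2) = altProd t s (n + 1) * t := altProd_succ_right_of_even t s hn1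
  have e3 : altProd t s (n + 2) = t * altProd s t (n + 1) := altProd_succ_left t s (n + 1)
  have e4 : altProd t s (n + 1) = t * altProd s t n := altProd_succ_left t s n
  have e5 : altProd t s (n + 3) = altProd t s (n + 2) * s := altProd_succ_right_of_odd t s hn2
  have e6 : altProd t s (n + 3) = t * altProd s t (n + 2) := altProd_succ_left t s (n + 2)
  have e7 : altProd s t (n + 3) = altProd s t (n + 2) * t := altProd_succ_right_of_odd s t hn2
  have e8 : altProd s t (n + 3) = s * altProd t s (n + 2) := altProd_succ_left s t (n + 2)
  have hsB : s * altProd s t (n + 2) = altProd s t (n + 2) := by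
    rw [altProd_add_two, ← mul_assoc, ← mul_assoc, hs]
  have hBs : altProd s t (n + 2) * s = altProd s t (n + 2) := by
    rw [e1, mul_assoc, hs]
  have htB : t * altProd s t (n + 2) = altProd s t (n + 2) := by
    rw [← e6, e5, ← hb, hBs]
  have hBt : altProd s t (n + 2) * t = altProd s t (n + 2) := by
    rw [← e7, e8, ← hb, hsB]
  have h1 : altProd s t (n + 1) = altProd s t (n + 2) :=
    ht.mul_left_cancel (by rw [← e3, ← hb, htB])
  have h2 : altProd t s (n + 1) = altProd s t (n + 2) :=
    ht.mul_right_cancel (by rw [← e2, ← hb, hBt])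
  have h3 : altProd s t n = altProd s t (n + 2) :=
    ht.mul_left_cancel (by rw [← e4, h2, htB])
  exact ⟨h1.trans h3.symm, h2.trans h3.symm⟩

end AltProd

section QuadraticRelation

variable {F A : Type*} [Field F] [Ring A] [Algebra F A] {q : F} {t : A}

lemma sub_one_mul_add_algebraMap_eq_zero_iff :
    (t - 1) * (t + algebraMap F A q) = 0 ↔ t * t = (1 - q) • t + algebraMap F A q := by
  have expand : (t - 1) * (t + algebraMap F A q) = t * t - ((1 - q) • t + algebraMap F A q) := by
    simp only [Algebra.algebraMap_eq_smul_one, sub_mul, mul_add, one_mul, mul_smul_comm, mul_one]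
    module
  rw [expand, sub_eq_zero]

lemma isUnit_of_sub_one_mul_add_algebraMap_eq_zero_s15 (hq : q ≠ 0)
    (h : (t - 1) * (t + algebraMap F A q) = 0) : IsUnit t := by
  rw [sub_one_mul_add_algebraMap_eq_zero_iff, Algebra.algebraMap_eq_smul_one] at h
  refine isUnit_iff_exists.mpr ⟨q⁻¹ • (t - (1 - q) • 1), ?_, ?_⟩
  · rw [mul_smul_comm, mul_sub, mul_smul_comm, mul_one, h, add_sub_cancel_left, smul_smul,
      inv_mul_cancel₀ hq, one_smul]
  · rw [smul_mul_assoc, sub_mul, smul_mul_assoc, one_mul, h, add_sub_cancel_left, smul_smul,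
      inv_mul_cancel₀ hq, one_smul]

end QuadraticRelation

lemma Submodule.span_eq_top_of_mul_mem {R A : Type*} [CommSemiring R] [Semiring A] [Algebra R A]
    {s S : Set A} (hs : Algebra.adjoin R s = ⊤) (h1 : 1 ∈ span R S)
    (hmul : ∀ x ∈ s, ∀ y ∈ S, x * y ∈ span R S) : span R S = ⊤ := by
  have hstable : ∀ a : A, ∀ y ∈ span R S, a * y ∈ span R S := by
    intro a
    have ha : a ∈ Algebra.adjoin R s := hs ▸ Algebra.mem_top
    induction ha using Algebra.adjoin_induction with
    | mem x hx =>
      exact (span_le (p := (span R S).comap (LinearMap.mulLeft R x))).mpr (hmul x hx)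
    | algebraMap c =>
      intro y hy
      rw [Algebra.algebraMap_eq_smul_one, smul_mul_assoc, one_mul]
      exact smul_mem _ c hy
    | add a b _ _ ha hb =>
      intro y hy
      rw [add_mul]
      exact add_mem (ha y hy) (hb y hy)
    | mul a b _ _ ha hb =>
      intro y hy
      rw [mul_assoc]
      exact ha _ (hb y hy)
  exact eq_top_iff.mpr fun a _ => by simpa using hstable a 1 h1

namespace HeckeAlg

variable {F : Type*} [Field F] {q : F} {m : ℕ}

lemma Tsgen_mul_self : Tsgen F q m * Tsgen F q m = Tsgen F q m := by
  simpa only [Tsgen, map_mul] using RingQuot.mkAlgHom_rel F (HeckeRel.quad_s (q := q) (m := m))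

lemma Ttgen_quadratic :
    (Ttgen F q m - 1) * (Ttgen F q m + algebraMap F (HeckeAlg F q m) q) = 0 := by
  simpa only [Ttgen, map_mul, map_sub, map_add, map_one, map_zero, AlgHom.commutes] using
    RingQuot.mkAlgHom_rel F (HeckeRel.quad_t (q := q) (m := m))

lemma Ttgen_mul_self :
    Ttgen F q m * Ttgen F q m = (1 - q) • Ttgen F q m + algebraMap F (HeckeAlg F q m) q :=
  sub_one_mul_add_algebraMap_eq_zero_iff.mp Ttgen_quadratic

lemma altProd_Tsgen_Ttgen :
    altProd (Tsgen F q m) (Ttgen F q m) m = altProd (Ttgen F q m) (Tsgen F q m) m := by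
  simpa only [Tsgen, Ttgen, map_altProd] using
    RingQuot.mkAlgHom_rel F (HeckeRel.braid (q := q) (m := m))

lemma adjoin_Tsgen_Ttgen : Algebra.adjoin F {Tsgen F q m, Ttgen F q m} = ⊤ := by
  have hgen : {Tsgen F q m, Ttgen F q m} =
      RingQuot.mkAlgHom F (HeckeRel F q m) '' Set.range (FreeAlgebra.ι F) := by
    ext x
    simp [Tsgen, Ttgen, or_comm, eq_comm]
  rw [hgen, ← AlgHom.map_adjoin, FreeAlgebra.adjoin_range_ι, Algebra.map_top,
    AlgHom.range_eq_top]
  exact RingQuot.mkAlgHom_surjective F _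

noncomputable def lift {B : Type*} [Ring B] [Algebra F B] (s t : B) (hs : s * s = s)
    (ht : (t - 1) * (t + algebraMap F B q) = 0) (hb : altProd s t m = altProd t s m) :
    HeckeAlg F q m →ₐ[F] B :=
  RingQuot.liftAlgHom F ⟨FreeAlgebra.lift F fun g => if g then s else t, by
    rintro _ _ (_ | _ | _) <;>
      simp only [map_mul, map_sub, map_add, map_one, map_zero, AlgHom.commutes, map_altProd,
        FreeAlgebra.lift_ι_apply, if_true, Bool.false_eq_true, if_false, hs, ht, hb]⟩

section Lift

variable {B : Type*} [Ring B] [Algebra F B] {s t : B} (hs : s * s = s)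
  (ht : (t - 1) * (t + algebraMap F B q) = 0) (hb : altProd s t m = altProd t s m)

@[simp] lemma lift_Tsgen : lift s t hs ht hb (Tsgen F q m) = s := by
  simp [lift, Tsgen]

@[simp] lemma lift_Ttgen : lift s t hs ht hb (Ttgen F q m) = t := by
  simp [lift, Ttgen]

end Lift

lemma span_altSet_eq_top (hq : q ≠ 0) {n : ℕ} (hn : Odd n) :
    Submodule.span F (altSet F q (n + 2)) = ⊤ := by
  set s := Tsgen F q (n + 2)
  set t := Ttgen F q (n + 2)
  obtain ⟨hs_stable, ht_stable⟩ := altProd_succ_eq_of_braid Tsgen_mul_self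
    (isUnit_of_sub_one_mul_add_algebraMap_eq_zero_s15 hq Ttgen_quadratic) hn altProd_Tsgen_Ttgen
  have memS : ∀ k ≤ n, altProd s t k ∈ Submodule.span F (altSet F q (n + 2)) :=
    fun k hk => Submodule.subset_span ⟨k, by omega, Or.inl rfl⟩
  have memT : ∀ k ≤ n, altProd t s k ∈ Submodule.span F (altSet F q (n + 2)) :=
    fun k hk => Submodule.subset_span ⟨k, by omega, Or.inr rfl⟩
  refine Submodule.span_eq_top_of_mul_mem adjoin_Tsgen_Ttgen (memS 0 n.zero_le) ?_
  rintro x (rfl | rfl) y ⟨k, hk, rfl | rfl⟩ <;> simp only [Nat.add_sub_cancel] at hk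
  · cases k with
    | zero => simpa using memS 1 hn.pos
    | succ j =>
      rw [altProd_succ_left, ← mul_assoc, Tsgen_mul_self, ← altProd_succ_left]
      exact memS (j + 1) hk
  · rw [← altProd_succ_left]
    obtain hk | rfl := hk.lt_or_eq
    · exact memS (k + 1) hk
    · exact hs_stable ▸ memS k le_rfl
  · rw [← altProd_succ_left]
    obtain hk | rfl := hk.lt_or_eq
    · exact memT (k + 1) hk
    · exact ht_stable ▸ memS k le_rfl
  · cases k with
    | zero => simpa using memT 1 hn.pos
    | succ j =>
      rw [altProd_succ_left, ← mul_assoc, Ttgen_mul_self, add_mul, smul_mul_assoc,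
        ← Algebra.smul_def, ← altProd_succ_left]
      exact add_mem (Submodule.smul_mem _ _ (memT (j + 1) hk))
        (Submodule.smul_mem _ _ (memS j (by omega)))

end HeckeAlg

/-- Index set of the spanning words `(T_s T_t ⋯)_k` (`inl k`, `0 ≤ k ≤ n`) and
`(T_t T_s ⋯)_(k+1)` (`inr k`, `0 ≤ k < n`), where `n = m - 2`. The operators `opS`, `opT` below
are left multiplication by `T_s`, `T_t` written in this basis. -/
abbrev AltWord (n : ℕ) : Type := Fin (n + 1) ⊕ Fin n

namespace AltWord

variable (F : Type*) [Field F] (q : F) (n : ℕ)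

/-- The basis vector of the word `(T_s T_t ⋯)_k`, clamped at `k = n` because
`(T_s T_t ⋯)_(n+1) = (T_s T_t ⋯)_n` in the algebra. -/
noncomputable def sVec (k : ℕ) : AltWord n → F :=
  Pi.basisFun F (AltWord n) (.inl ⟨min k n, by omega⟩)

noncomputable def tVec (k : Fin n) : AltWord n → F := Pi.basisFun F (AltWord n) (.inr k)

noncomputable def opS : Module.End F (AltWord n → F) :=
  (Pi.basisFun F (AltWord n)).constr F
    (Sum.elim (fun k => sVec F n (max k 1)) (fun k => sVec F n (k + 2)))

noncomputable def opT : Module.End F (AltWord n → F) :=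
  (Pi.basisFun F (AltWord n)).constr F
    (Sum.elim (fun k => if h : (k : ℕ) < n then tVec F n ⟨k, h⟩ else sVec F n n)
      (fun k => (1 - q) • tVec F n k + q • sVec F n k))

variable {F q n}

lemma sVec_congr {j k : ℕ} (h : min j n = min k n) : sVec F n j = sVec F n k := by
  simp [sVec, h]

lemma basisFun_inl (k : Fin (n + 1)) : Pi.basisFun F (AltWord n) (.inl k) = sVec F n k := by
  simp [sVec, min_eq_left (Nat.lt_succ_iff.mp k.isLt)]

lemma opS_sVec (k : ℕ) : opS F n (sVec F n k) = sVec F n (max k 1) := by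
  conv_lhs => rw [sVec, opS, Module.Basis.constr_basis, Sum.elim_inl]
  exact sVec_congr (by dsimp only; omega)

lemma opS_tVec (k : Fin n) : opS F n (tVec F n k) = sVec F n (k + 2) := by
  conv_lhs => rw [tVec, opS, Module.Basis.constr_basis, Sum.elim_inr]

lemma opT_sVec_of_lt {k : ℕ} (hk : k < n) : opT F q n (sVec F n k) = tVec F n ⟨k, hk⟩ := by
  conv_lhs => rw [sVec, opT, Module.Basis.constr_basis, Sum.elim_inl, dif_pos (by simp; omega)]
  simp [min_eq_left hk.le]

lemma opT_sVec_self : opT F q n (sVec F n n) = sVec F n n := by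
  conv_lhs => rw [sVec, opT, Module.Basis.constr_basis, Sum.elim_inl, dif_neg (by simp)]

lemma opT_tVec (k : Fin n) :
    opT F q n (tVec F n k) = (1 - q) • tVec F n k + q • sVec F n k := by
  conv_lhs => rw [tVec, opT, Module.Basis.constr_basis, Sum.elim_inr]

lemma opS_mul_self : opS F n * opS F n = opS F n := by
  refine (Pi.basisFun F (AltWord n)).ext fun i => ?_
  rcases i with k | k
  · rw [basisFun_inl, Module.End.mul_apply, opS_sVec, opS_sVec, max_assoc, max_self]
  · rw [Module.End.mul_apply, ← tVec, opS_tVec, opS_sVec, max_eq_left (by omega)]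

lemma opT_mul_self :
    opT F q n * opT F q n =
      (1 - q) • opT F q n + algebraMap F (Module.End F (AltWord n → F)) q := by
  refine (Pi.basisFun F (AltWord n)).ext fun i => ?_
  simp only [Module.End.mul_apply, LinearMap.add_apply, LinearMap.smul_apply,
    Module.algebraMap_end_apply]
  rcases i with k | k
  · rw [basisFun_inl]
    by_cases hk : (k : ℕ) < n
    · rw [opT_sVec_of_lt hk, opT_tVec]
    · rw [show (k : ℕ) = n by omega, opT_sVec_self, opT_sVec_self, ← add_smul, sub_add_cancel,
        one_smul]
  · rw [← tVec, opT_tVec, map_add, map_smul, map_smul, opT_tVec, opT_sVec_of_lt k.isLt]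

lemma opS_mul_opT_sVec (k : ℕ) : (opS F n * opT F q n) (sVec F n k) = sVec F n (k + 2) := by
  rw [Module.End.mul_apply]
  by_cases hk : k < n
  · rw [opT_sVec_of_lt hk, opS_tVec]
  · rw [sVec_congr (show min k n = min n n by omega), opT_sVec_self, opS_sVec]
    exact sVec_congr (by omega)

lemma opS_mul_opT_pow_sVec (j k : ℕ) :
    ((opS F n * opT F q n) ^ j) (sVec F n k) = sVec F n (k + 2 * j) := by
  induction j generalizing k with
  | zero => simp
  | succ j ih => rw [pow_succ, Module.End.mul_apply, opS_mul_opT_sVec, ih, add_assoc, mul_add_one,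
      add_comm 2]

lemma opS_mul_opT_pow_basisFun {r : ℕ} (hn : n = 2 * r + 1) (i : AltWord n) :
    ((opS F n * opT F q n) ^ (r + 1)) (Pi.basisFun F (AltWord n) i) = sVec F n n := by
  rcases i with k | k
  · rw [basisFun_inl, opS_mul_opT_pow_sVec]
    exact sVec_congr (by omega)
  · rw [pow_succ, Module.End.mul_apply, Module.End.mul_apply, ← tVec, opT_tVec, map_add,
      map_smul, map_smul, opS_tVec, opS_sVec, map_add, map_smul, map_smul, opS_mul_opT_pow_sVec,
      opS_mul_opT_pow_sVec, sVec_congr (k := n) (by omega), sVec_congr (j := max _ 1 + _) (k := n)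
      (by omega), ← add_smul, sub_add_cancel, one_smul]

lemma altProd_opS_opT (hn : Odd n) :
    altProd (opS F n) (opT F q n) (n + 2) = altProd (opT F q n) (opS F n) (n + 2) := by
  obtain ⟨r, rfl⟩ := hn
  rw [show 2 * r + 1 + 2 = 2 * (r + 1) + 1 by ring, altProd_two_mul_add_one,
    altProd_two_mul_add_one_swap]
  refine (Pi.basisFun F (AltWord (2 * r + 1))).ext fun i => ?_
  rw [Module.End.mul_apply, Module.End.mul_apply, opS_mul_opT_pow_basisFun rfl, opT_sVec_self]
  rcases i with k | k
  · rw [basisFun_inl, opS_sVec, opS_mul_opT_pow_sVec]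
    exact sVec_congr (by omega)
  · rw [← tVec, opS_tVec, opS_mul_opT_pow_sVec]
    exact sVec_congr (by omega)

lemma altProd_opS_opT_sVec_zero (k : ℕ) :
    altProd (opS F n) (opT F q n) k (sVec F n 0) = sVec F n k := by
  induction k using Nat.twoStepInduction with
  | zero => rfl
  | one => rw [altProd_one, opS_sVec, max_eq_right zero_le_one]
  | more k ih _ => rw [altProd_add_two, Module.End.mul_apply, ih, opS_mul_opT_sVec]

lemma altProd_opT_opS_sVec_zero {k : ℕ} (hk : k < n) :
    altProd (opT F q n) (opS F n) (k + 1) (sVec F n 0) = tVec F n ⟨k, hk⟩ := by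
  rw [altProd_succ_left, Module.End.mul_apply, altProd_opS_opT_sVec_zero, opT_sVec_of_lt hk]

end AltWord

namespace HeckeAlg

variable (F : Type*) [Field F] (q : F) {n : ℕ}

noncomputable def regRep (hn : Odd n) :
    HeckeAlg F q (n + 2) →ₐ[F] Module.End F (AltWord n → F) :=
  lift (AltWord.opS F n) (AltWord.opT F q n) AltWord.opS_mul_self
    (sub_one_mul_add_algebraMap_eq_zero_iff.mpr AltWord.opT_mul_self) (AltWord.altProd_opS_opT hn)

noncomputable def altFamily (n : ℕ) : AltWord n → HeckeAlg F q (n + 2) :=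
  Sum.elim (fun k => altProd (Tsgen F q (n + 2)) (Ttgen F q (n + 2)) k)
    (fun k => altProd (Ttgen F q (n + 2)) (Tsgen F q (n + 2)) (k + 1))

lemma range_altFamily : Set.range (altFamily F q n) = altSet F q (n + 2) := by
  ext x
  constructor
  · rintro ⟨k | k, rfl⟩
    · exact ⟨k, by omega, Or.inl rfl⟩
    · exact ⟨k + 1, by omega, Or.inr rfl⟩
  · rintro ⟨k, hk, rfl | rfl⟩
    · exact ⟨.inl ⟨k, by omega⟩, rfl⟩
    · cases k with
      | zero => exact ⟨.inl 0, rfl⟩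
      | succ j => exact ⟨.inr ⟨j, by omega⟩, rfl⟩

lemma linearIndependent_altFamily (hn : Odd n) : LinearIndependent F (altFamily F q n) := by
  let eval := (LinearMap.applyₗ (AltWord.sVec F n 0)).comp (regRep F q hn).toLinearMap
  have heval : eval ∘ altFamily F q n = Pi.basisFun F (AltWord n) := by
    funext i
    change regRep F q hn (altFamily F q n i) (AltWord.sVec F n 0) = _
    rcases i with k | k
    · rw [altFamily, Sum.elim_inl, map_altProd, regRep, lift_Tsgen, lift_Ttgen,
        AltWord.altProd_opS_opT_sVec_zero, AltWord.basisFun_inl]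
    · rw [altFamily, Sum.elim_inr, map_altProd, regRep, lift_Tsgen, lift_Ttgen,
        AltWord.altProd_opT_opS_sVec_zero k.isLt]
      rfl
  exact LinearIndependent.of_comp eval (heval ▸ (Pi.basisFun F (AltWord n)).linearIndependent)

end HeckeAlg

/-- For odd `m ≥ 3` and `q ≠ 0`, the algebra generated by `T_s, T_t` with
`T_s² = T_s`, `(T_t−1)(T_t+q) = 0` and the braid relation of length `m` has
dimension `2m − 3`, with basis the alternating products
`(T_s T_t ⋯)_k, (T_t T_s ⋯)_k` for `0 ≤ k ≤ m−2`. -/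
theorem heckeAlg_dim_eq (F : Type*) [Field F] (q : F) (hq : q ≠ 0)
    (m : ℕ) (hm : 3 ≤ m) (hodd : Odd m) :
    Module.finrank F (HeckeAlg F q m) = 2 * m - 3 ∧
      LinearIndependent F ((↑) : altSet F q m → HeckeAlg F q m) ∧
      Submodule.span F (altSet F q m) = ⊤ := by
  obtain ⟨n, rfl, hn⟩ : ∃ n, m = n + 2 ∧ Odd n := by
    obtain ⟨l, rfl⟩ := hodd
    exact ⟨2 * l - 1, by omega, l - 1, by omega⟩
  have hli := HeckeAlg.linearIndependent_altFamily F q hn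
  have hspan := HeckeAlg.span_altSet_eq_top hq hn
  rw [← HeckeAlg.range_altFamily] at hspan ⊢
  refine ⟨?_, hli.linearIndepOn_id, hspan⟩
  rw [Module.finrank_eq_card_basis (Module.Basis.mk hli hspan.ge)]
  simp only [Fintype.card_sum, Fintype.card_fin]
  omega
end

section
/- Define for compositions α of m and β of n the product α ⊗̂ β in the free ℤ-module Comp on all compositions by α ⊗̂ β = αβ + α▷β (concatenation plus near-concatenation), and the coproduct Δ(α) = Σ_{i=0}^{m} α_{≤i} ⊗ α_{>i}. Then the map S sending each composition α of n to (−1)^n α^c, where α^c is the complementary composition (with D(α^c) = {1,...,n−1}\D(α)), is a two-sided antipode: Σ_{i=0}^{n} S(α_{≤i}) ⊗̂ α_{>i} = u∘ε(α) = Σ_{i=0}^{n} α_{≤i} ⊗̂ S(α_{>i}) for every composition α. -/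
/-- The descent set of a composition (a list of positive parts): the set of
partial sums of proper nonempty prefixes. -/
def descents (α : List ℕ) : Finset ℕ :=
  ((Finset.range α.length).filter (fun i => 0 < i)).image (fun i => (α.take i).sum)

/-- The composition of `n` whose descent set is `s ∩ {1,...,n-1}`. -/
def fromDescents (n : ℕ) (s : Finset ℕ) : List ℕ :=
  if n = 0 then []
  else
    let l := ((s.filter (fun x => 0 < x ∧ x < n)).sort (· ≤ ·)) ++ [n]
    (List.zip (0 :: l) l).map (fun p => p.2 - p.1)

/-- The complementary composition `α^c`, with `D(α^c) = {1,...,n-1} \ D(α)`. -/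
def complComp (α : List ℕ) : List ℕ :=
  fromDescents α.sum ((Finset.Icc 1 (α.sum - 1)) \ descents α)

/-- The composition `α_{≤i}`. -/
def restrLe (α : List ℕ) (i : ℕ) : List ℕ := fromDescents i (descents α)

/-- The composition `α_{>i}`. -/
def restrGt (α : List ℕ) (i : ℕ) : List ℕ :=
  fromDescents (α.sum - i) ((descents α).image (fun d => d - i))

/-- The near-concatenation `α▷β`. -/
def nearConcat (α β : List ℕ) : List ℕ :=
  if α = [] then β
  else if β = [] then α
  else α.dropLast ++ ((α.getLast! + β.head!) :: β.tail)

/-- The product `α ⊗̂ β = αβ + α▷β` (with the empty composition acting as unit)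
in the free `ℤ`-module on compositions. -/
noncomputable def hatMul (α β : List ℕ) : List ℕ →₀ ℤ :=
  if α = [] ∨ β = [] then Finsupp.single (α ++ β) 1
  else Finsupp.single (α ++ β) 1 + Finsupp.single (nearConcat α β) 1

/-!
A composition of `n` is determined by its descent set `D ⊆ {1, …, n - 1}`. For `0 < i < n`,
the concatenation and the near-concatenation of `(α_{≤i})^c` with `α_{>i}` have descent sets
that agree with the complement of `D` below `i`, with `D` above `i`, and differ exactly at `i`;
so `S(α_{≤i}) ⊗̂ α_{>i}` is `(-1)^i` times the sum of the compositions with descent sets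
`D ∆ [0, i)` and `D ∆ [0, i]`, and the alternating sum telescopes to `0`. The second identity is
the first one for the complementary descent set, multiplied by `(-1)^n`.
-/

def diffsFrom : ℕ → List ℕ → List ℕ
  | _, [] => []
  | p, b :: m => (b - p) :: diffsFrom b m

lemma map_sub_zip_eq_diffsFrom (p : ℕ) (l : List ℕ) :
    ((p :: l).zip l).map (fun q => q.2 - q.1) = diffsFrom p l := by
  induction l generalizing p with
  | nil => rfl
  | cons b l ih => simp only [List.zip_cons_cons, List.map_cons, diffsFrom, ih]

lemma length_diffsFrom (p : ℕ) (l : List ℕ) : (diffsFrom p l).length = l.length := by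
  induction l generalizing p with
  | nil => rfl
  | cons b l ih => simp [diffsFrom, ih]

lemma diffsFrom_append (p : ℕ) (l₁ l₂ : List ℕ) :
    diffsFrom p (l₁ ++ l₂) = diffsFrom p l₁ ++ diffsFrom (l₁.getLastD p) l₂ := by
  induction l₁ generalizing p with
  | nil => rfl
  | cons b l₁ ih => rw [List.cons_append, diffsFrom, diffsFrom, ih, List.getLastD_cons]; rfl

lemma diffsFrom_map_add (p a : ℕ) (l : List ℕ) :
    diffsFrom (p + a) (l.map (· + a)) = diffsFrom p l := by
  induction l generalizing p with
  | nil => rfl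
  | cons b l ih => simp [diffsFrom, ih, Nat.add_sub_add_right]

lemma diffsFrom_take (p : ℕ) (l : List ℕ) (k : ℕ) :
    (diffsFrom p l).take k = diffsFrom p (l.take k) := by
  induction l generalizing p k with
  | nil => simp [diffsFrom]
  | cons b l ih => cases k <;> simp [diffsFrom, ih]

lemma sum_diffsFrom_add {p : ℕ} {l : List ℕ} (h : (p :: l).Pairwise (· ≤ ·)) :
    (diffsFrom p l).sum + p = l.getLastD p := by
  induction l generalizing p with
  | nil => simp [diffsFrom]
  | cons b l ih =>
    obtain ⟨hp, hl⟩ := List.pairwise_cons.1 h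
    have hpb : p ≤ b := hp b List.mem_cons_self
    have hsum := ih hl
    rw [diffsFrom, List.sum_cons, List.getLastD_cons]
    omega

lemma sum_take_diffsFrom_zero {l : List ℕ} (h : (0 :: l).Pairwise (· ≤ ·)) {j : ℕ}
    (hj : j < l.length) : ((diffsFrom 0 l).take (j + 1)).sum = l[j] := by
  have hsub : (0 :: l.take (j + 1)).Pairwise (· ≤ ·) :=
    h.sublist ((List.take_sublist _ _).cons_cons 0)
  rw [diffsFrom_take, ← add_zero (List.sum _), sum_diffsFrom_add hsub,
    List.getLastD_eq_getLast?, List.getLast?_take]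
  simp [hj]

lemma descents_diffsFrom_zero {l : List ℕ} (h : (0 :: l).Pairwise (· ≤ ·)) :
    descents (diffsFrom 0 l) = l.dropLast.toFinset := by
  ext x
  simp only [descents, Finset.mem_image, Finset.mem_filter, Finset.mem_range,
    length_diffsFrom, List.mem_toFinset, List.mem_iff_getElem, List.length_dropLast,
    List.getElem_dropLast]
  constructor
  · rintro ⟨i, ⟨hi, hi0⟩, rfl⟩
    obtain ⟨j, rfl⟩ : ∃ j, i = j + 1 := ⟨i - 1, by omega⟩
    exact ⟨j, by omega, (sum_take_diffsFrom_zero h (by omega)).symm⟩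
  · rintro ⟨j, hj, rfl⟩
    exact ⟨j + 1, ⟨by omega, by omega⟩, sum_take_diffsFrom_zero h (by omega)⟩

lemma pairwise_append_cons_of_lt {l m : List ℕ} {a : ℕ}
    (h₁ : (l ++ [a]).Pairwise (· < ·)) (h₂ : (a :: m).Pairwise (· < ·)) :
    (l ++ a :: m).Pairwise (· < ·) := by
  rw [List.pairwise_append] at h₁ ⊢
  refine ⟨h₁.1, h₂, fun x hx y hy => ?_⟩
  have hxa : x < a := h₁.2.2 x hx a List.mem_cons_self
  rcases List.mem_cons.1 hy with rfl | hy
  · exact hxa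
  · exact hxa.trans (List.rel_of_pairwise_cons h₂ hy)

lemma fromDescents_eq_diffsFrom {n : ℕ} {s : Finset ℕ} {L : List ℕ}
    (hL : (0 :: (L ++ [n])).Pairwise (· < ·))
    (hmem : ∀ x, 0 < x → x < n → (x ∈ L ↔ x ∈ s)) :
    fromDescents n s = diffsFrom 0 (L ++ [n]) := by
  have hn : 0 < n := List.rel_of_pairwise_cons hL (by simp)
  have hsort : (s.filter (fun x => 0 < x ∧ x < n)).sort (· ≤ ·) = L := by
    refine (Finset.sortedLT_sort _).pairwise.eq_of_mem_iff
      (List.pairwise_append.1 (List.pairwise_cons.1 hL).2).1 fun x => ?_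
    have hx : x ∈ L → 0 < x ∧ x < n := fun hx =>
      ⟨List.rel_of_pairwise_cons hL (by simp [hx]),
        (List.pairwise_append.1 (List.pairwise_cons.1 hL).2).2.2 x hx n (by simp)⟩
    rw [Finset.mem_sort, Finset.mem_filter]
    by_cases h : 0 < x ∧ x < n
    · rw [hmem x h.1 h.2]; tauto
    · tauto
  rw [fromDescents, if_neg hn.ne', hsort]
  exact map_sub_zip_eq_diffsFrom 0 _

def sortedDescents (n : ℕ) (s : Finset ℕ) : List ℕ :=
  (s.filter (fun x => 0 < x ∧ x < n)).sort (· ≤ ·)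

@[simp]
lemma mem_sortedDescents {n x : ℕ} {s : Finset ℕ} :
    x ∈ sortedDescents n s ↔ x ∈ s ∧ 0 < x ∧ x < n := by
  simp [sortedDescents]

lemma pairwise_sortedDescents {n : ℕ} (hn : n ≠ 0) (s : Finset ℕ) :
    (0 :: (sortedDescents n s ++ [n])).Pairwise (· < ·) := by
  refine List.pairwise_cons.2 ⟨fun x hx => ?_,
    List.pairwise_append.2 ⟨(Finset.sortedLT_sort _).pairwise, by simp, fun x hx y hy => ?_⟩⟩
  · simp at hx; omega
  · simp at hx hy; omega

lemma fromDescents_eq_diffsFrom_sortedDescents {n : ℕ} (hn : n ≠ 0) (s : Finset ℕ) :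
    fromDescents n s = diffsFrom 0 (sortedDescents n s ++ [n]) :=
  fromDescents_eq_diffsFrom (pairwise_sortedDescents hn s) (by simp_all)

@[simp]
lemma fromDescents_zero (s : Finset ℕ) : fromDescents 0 s = [] := rfl

lemma fromDescents_congr {n : ℕ} {s t : Finset ℕ}
    (h : ∀ x, 0 < x → x < n → (x ∈ s ↔ x ∈ t)) : fromDescents n s = fromDescents n t := by
  rcases eq_or_ne n 0 with rfl | hn
  · rfl
  · rw [fromDescents_eq_diffsFrom_sortedDescents hn t]
    exact fromDescents_eq_diffsFrom (pairwise_sortedDescents hn t) (by simp_all)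

lemma sum_fromDescents (n : ℕ) (s : Finset ℕ) : (fromDescents n s).sum = n := by
  rcases eq_or_ne n 0 with rfl | hn
  · rfl
  · have h := sum_diffsFrom_add ((pairwise_sortedDescents hn s).imp le_of_lt)
    rwa [List.getLastD_concat, add_zero, ← fromDescents_eq_diffsFrom_sortedDescents hn] at h

lemma descents_fromDescents {n : ℕ} (hn : n ≠ 0) (s : Finset ℕ) :
    descents (fromDescents n s) = s.filter (fun x => 0 < x ∧ x < n) := by
  rw [fromDescents_eq_diffsFrom_sortedDescents hn,
    descents_diffsFrom_zero ((pairwise_sortedDescents hn s).imp le_of_lt), List.dropLast_concat,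
    sortedDescents, Finset.sort_toFinset]

lemma complComp_fromDescents (n : ℕ) (s : Finset ℕ) :
    complComp (fromDescents n s) = fromDescents n (Finset.Icc 1 (n - 1) \ s) := by
  rcases eq_or_ne n 0 with rfl | hn
  · rfl
  rw [complComp, sum_fromDescents, descents_fromDescents hn]
  refine fromDescents_congr fun x hx0 hxn => ?_
  simp only [Finset.mem_filter, Finset.mem_sdiff, Finset.mem_Icc]
  grind

lemma nearConcat_append_singleton (l m : List ℕ) (x y : ℕ) :
    nearConcat (l ++ [x]) (y :: m) = l ++ (x + y) :: m := by
  simp [nearConcat]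

lemma nearConcat_diffsFrom {p a : ℕ} {l m : List ℕ} (hm : m ≠ [])
    (h : (p :: (l ++ a :: m)).Pairwise (· ≤ ·)) :
    nearConcat (diffsFrom p (l ++ [a])) (diffsFrom a m) = diffsFrom p (l ++ m) := by
  obtain ⟨y, m, rfl⟩ := List.exists_cons_of_ne_nil hm
  obtain ⟨-, ham, hlam⟩ := List.pairwise_append.1 (show ((p :: l) ++ a :: y :: m).Pairwise _ from h)
  have hc : l.getLastD p ≤ a := hlam _ List.getLastD_mem_cons a List.mem_cons_self
  have hay : a ≤ y := List.rel_of_pairwise_cons ham List.mem_cons_self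
  rw [diffsFrom_append, diffsFrom_append, diffsFrom, diffsFrom, diffsFrom,
    nearConcat_append_singleton]
  congr 2
  omega

lemma pairwise_concat_sortedDescents {a b : ℕ} (ha : a ≠ 0) (hb : b ≠ 0) (s t : Finset ℕ) :
    (0 :: (sortedDescents a s ++ a :: (sortedDescents b t ++ [b]).map (· + a))).Pairwise
      (· < ·) := by
  have hB := (pairwise_sortedDescents hb t).map (· + a) fun _ _ h => Nat.add_lt_add_right h a
  rw [List.map_cons, zero_add] at hB
  exact pairwise_append_cons_of_lt (l := 0 :: _) (pairwise_sortedDescents ha s) hB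

lemma mem_map_add_sortedDescents {a b x : ℕ} {t : Finset ℕ} :
    x ∈ (sortedDescents b t).map (· + a) ↔ a < x ∧ x < a + b ∧ x - a ∈ t := by
  simp only [List.mem_map, mem_sortedDescents]
  constructor
  · rintro ⟨y, ⟨hy, hy0, hyb⟩, rfl⟩
    exact ⟨by omega, by omega, by simpa using hy⟩
  · rintro ⟨hax, hxb, hx⟩
    exact ⟨x - a, ⟨hx, by omega, by omega⟩, by omega⟩

lemma fromDescents_eq_diffsFrom_shift {b : ℕ} (hb : b ≠ 0) (a : ℕ) (t : Finset ℕ) :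
    fromDescents b t = diffsFrom a ((sortedDescents b t ++ [b]).map (· + a)) := by
  rw [fromDescents_eq_diffsFrom_sortedDescents hb, ← diffsFrom_map_add 0 a, zero_add]

lemma append_fromDescents {a b : ℕ} (ha : a ≠ 0) (hb : b ≠ 0) {s t S : Finset ℕ}
    (hS : ∀ x, 0 < x → x < a + b → (x ∈ S ↔ x < a ∧ x ∈ s ∨ x = a ∨ a < x ∧ x - a ∈ t)) :
    fromDescents a s ++ fromDescents b t = fromDescents (a + b) S := by
  have hL : sortedDescents a s ++ a :: (sortedDescents b t ++ [b]).map (· + a)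
      = (sortedDescents a s ++ a :: (sortedDescents b t).map (· + a)) ++ [a + b] := by
    simp [add_comm]
  have hG := pairwise_concat_sortedDescents ha hb s t
  rw [hL] at hG
  rw [fromDescents_eq_diffsFrom hG fun x hx0 hxab => ?_,
    fromDescents_eq_diffsFrom_sortedDescents ha, fromDescents_eq_diffsFrom_shift hb a, ← hL]
  · have := diffsFrom_append 0 (sortedDescents a s ++ [a]) ((sortedDescents b t ++ [b]).map (· + a))
    rwa [List.getLastD_concat, List.append_assoc, List.singleton_append, eq_comm] at this
  · rw [hS x hx0 hxab]
    simp only [List.mem_append, List.mem_cons, mem_sortedDescents, mem_map_add_sortedDescents]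
    grind

lemma nearConcat_fromDescents {a b : ℕ} (ha : a ≠ 0) (hb : b ≠ 0) {s t S : Finset ℕ}
    (hS : ∀ x, 0 < x → x < a + b → (x ∈ S ↔ x < a ∧ x ∈ s ∨ a < x ∧ x - a ∈ t)) :
    nearConcat (fromDescents a s) (fromDescents b t) = fromDescents (a + b) S := by
  have hG := pairwise_concat_sortedDescents ha hb s t
  have hL : sortedDescents a s ++ (sortedDescents b t ++ [b]).map (· + a)
      = (sortedDescents a s ++ (sortedDescents b t).map (· + a)) ++ [a + b] := by
    simp [add_comm]
  rw [fromDescents_eq_diffsFrom_sortedDescents ha, fromDescents_eq_diffsFrom_shift hb a,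
    nearConcat_diffsFrom (by simp) (hG.imp le_of_lt), hL]
  refine (fromDescents_eq_diffsFrom ?_ fun x hx0 hxab => ?_).symm
  · rw [← hL]
    exact hG.sublist (((List.sublist_cons_self a _).append_left _).cons_cons 0)
  · rw [hS x hx0 hxab]
    simp only [List.mem_append, mem_sortedDescents, mem_map_add_sortedDescents]
    grind

lemma fromDescents_ne_nil {n : ℕ} (hn : n ≠ 0) (s : Finset ℕ) : fromDescents n s ≠ [] :=
  fun h => hn (by rw [← sum_fromDescents n s, h, List.sum_nil])

lemma hatMul_nil_left (β : List ℕ) : hatMul [] β = Finsupp.single β 1 := by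
  simp [hatMul]

lemma hatMul_nil_right (α : List ℕ) : hatMul α [] = Finsupp.single α 1 := by
  simp [hatMul]

lemma hatMul_fromDescents {a b : ℕ} (ha : a ≠ 0) (hb : b ≠ 0) {s t S : Finset ℕ}
    (hS : ∀ x, 0 < x → x < a + b → x ≠ a → (x ∈ S ↔ x < a ∧ x ∈ s ∨ a < x ∧ x - a ∈ t)) :
    hatMul (fromDescents a s) (fromDescents b t)
      = Finsupp.single (fromDescents (a + b) (insert a S)) 1
        + Finsupp.single (fromDescents (a + b) (S.erase a)) 1 := by
  rw [hatMul, if_neg (by simp [fromDescents_ne_nil, ha, hb]),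
    append_fromDescents ha hb fun x hx0 hxab => ?_,
    nearConcat_fromDescents ha hb fun x hx0 hxab => ?_]
  all_goals
    rcases eq_or_ne x a with rfl | hxa
    · simp
    · simp [hxa, hS x hx0 hxab hxa]

lemma insert_add_erase_eq_add_symmDiff_singleton {M : Type*} [AddCommMonoid M]
    (f : Finset ℕ → M) (S : Finset ℕ) (i : ℕ) :
    f (insert i S) + f (S.erase i) = f S + f (symmDiff S {i}) := by
  by_cases hi : i ∈ S
  · have : symmDiff S {i} = S.erase i := by ext x; grind [Finset.mem_symmDiff]
    rw [Finset.insert_eq_of_mem hi, this]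
  · have : symmDiff S {i} = insert i S := by ext x; grind [Finset.mem_symmDiff]
    rw [Finset.erase_eq_of_notMem hi, this, add_comm]

lemma sum_range_neg_one_pow_smul_eq_zero {M : Type*} [AddCommGroup M] (f t : ℕ → M) {n : ℕ}
    (hn : n ≠ 0) (h₀ : t 0 = f 1) (hₙ : t n = f n)
    (hmid : ∀ i, 0 < i → i < n → t i = f i + f (i + 1)) :
    ∑ i ∈ Finset.range (n + 1), (-1 : ℤ) ^ i • t i = 0 := by
  set g : ℕ → M := fun i => if i = 0 ∨ n < i then 0 else f i
  have ht : ∀ i ∈ Finset.range (n + 1),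
      (-1 : ℤ) ^ i • t i = (-1 : ℤ) ^ i • g i - (-1 : ℤ) ^ (i + 1) • g (i + 1) := by
    intro i hi
    rw [Finset.mem_range] at hi
    rw [pow_succ, mul_neg_one, neg_smul, sub_neg_eq_add, ← smul_add]
    congr 1
    rcases Nat.eq_zero_or_pos i with rfl | hi0
    · simp [g, h₀, hn]
    rcases (Nat.lt_succ_iff.1 hi).lt_or_eq with hin | rfl
    · simp [g, hmid i hi0 hin, hi0.ne', hin.not_gt, Nat.succ_le_of_lt hin |>.not_gt]
    · simp [g, hₙ, hn]
  rw [Finset.sum_congr rfl ht, Finset.sum_range_sub']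
  simp [g]

lemma mem_image_sub_iff {D : Finset ℕ} {i x : ℕ} (hx : 0 < x) :
    x ∈ D.image (fun d => d - i) ↔ x + i ∈ D := by
  refine ⟨fun h => ?_, fun h => Finset.mem_image.2 ⟨x + i, h, Nat.add_sub_cancel x i⟩⟩
  obtain ⟨d, hd, rfl⟩ := Finset.mem_image.1 h
  rwa [Nat.sub_add_cancel (by omega)]

lemma hatMul_complComp_fromDescents (D : Finset ℕ) {i n : ℕ} (hi : i ≠ 0) (hin : i < n) :
    hatMul (complComp (fromDescents i D)) (fromDescents (n - i) (D.image fun d => d - i))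
      = Finsupp.single (fromDescents n (symmDiff D (Finset.range i))) 1
        + Finsupp.single (fromDescents n (symmDiff D (Finset.range (i + 1)))) 1 := by
  obtain ⟨b, rfl⟩ := Nat.exists_eq_add_of_le hin.le
  rw [Nat.add_sub_cancel_left, complComp_fromDescents,
    hatMul_fromDescents hi (by omega) (S := symmDiff D (Finset.range i)) fun x hx0 _ hxi => ?_,
    insert_add_erase_eq_add_symmDiff_singleton (fun S => Finsupp.single (fromDescents (i + b) S) 1)]
  · congr 3
    ext x
    simp only [Finset.mem_symmDiff, Finset.mem_range, Finset.mem_singleton]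
    grind
  · rcases Nat.lt_or_gt_of_ne hxi with h | h
    · simp [Finset.mem_symmDiff, h, h.not_gt]
      exact fun _ => by omega
    · simp [Finset.mem_symmDiff, h, h.not_gt, mem_image_sub_iff (Nat.sub_pos_of_lt h),
        Nat.sub_add_cancel h.le]

theorem sum_hatMul_complComp_fromDescents_eq_zero {n : ℕ} (hn : n ≠ 0) (D : Finset ℕ) :
    ∑ i ∈ Finset.range (n + 1), (-1 : ℤ) ^ i •
      hatMul (complComp (fromDescents i D)) (fromDescents (n - i) (D.image fun d => d - i))
      = 0 := by
  refine sum_range_neg_one_pow_smul_eq_zero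
    (fun j => Finsupp.single (fromDescents n (symmDiff D (Finset.range j))) 1) _ hn ?_ ?_
    fun i hi hin => hatMul_complComp_fromDescents D hi.ne' hin
  · rw [complComp_fromDescents, fromDescents_zero, hatMul_nil_left, Nat.sub_zero]
    refine congrArg (Finsupp.single · 1) (fromDescents_congr fun x hx0 _ => ?_)
    simp [Finset.mem_symmDiff, hx0.ne']
  · rw [Nat.sub_self, fromDescents_zero, hatMul_nil_right, complComp_fromDescents]
    refine congrArg (Finsupp.single · 1) (fromDescents_congr fun x hx0 hxn => ?_)
    simp [Finset.mem_symmDiff, hxn]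
    omega

theorem sum_hatMul_fromDescents_complComp_eq_zero {n : ℕ} (hn : n ≠ 0) (D : Finset ℕ) :
    ∑ i ∈ Finset.range (n + 1), (-1 : ℤ) ^ (n - i) •
      hatMul (fromDescents i D) (complComp (fromDescents (n - i) (D.image fun d => d - i)))
      = 0 := by
  set E := Finset.Icc 1 (n - 1) \ D
  have hterm : ∀ i ∈ Finset.range (n + 1),
      (-1 : ℤ) ^ (n - i) •
        hatMul (fromDescents i D) (complComp (fromDescents (n - i) (D.image fun d => d - i)))
      = (-1 : ℤ) ^ n • ((-1 : ℤ) ^ i •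
        hatMul (complComp (fromDescents i E)) (fromDescents (n - i) (E.image fun d => d - i))) := by
    intro i hi
    rw [Finset.mem_range] at hi
    have hsign : (-1 : ℤ) ^ (n - i) = (-1) ^ n * (-1) ^ i := by
      rw [← pow_add, show n + i = n - i + 2 * i by omega, pow_add, pow_mul]
      simp
    rw [smul_smul, ← hsign, complComp_fromDescents, complComp_fromDescents]
    congr 2
    · refine fromDescents_congr fun x hx0 hxi => ?_
      simp only [E, Finset.mem_sdiff, Finset.mem_Icc]
      grind
    · refine fromDescents_congr fun x hx0 hxn => ?_
      rw [Finset.mem_sdiff, mem_image_sub_iff hx0, mem_image_sub_iff hx0]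
      simp only [E, Finset.mem_sdiff, Finset.mem_Icc]
      grind
  rw [Finset.sum_congr rfl hterm, ← Finset.smul_sum,
    sum_hatMul_complComp_fromDescents_eq_zero hn E, smul_zero]

/-- The map `S(α) = (−1)^{|α|} α^c` is a two-sided antipode for the algebra and
coalgebra `Comp`:  `Σ_{i=0}^{n} S(α_{≤i}) ⊗̂ α_{>i} = u∘ε(α) = Σ_{i=0}^{n} α_{≤i} ⊗̂ S(α_{>i})`
for every composition `α` of `n`. -/
theorem comp_antipode (α : List ℕ) (hα : ∀ x ∈ α, 0 < x) :
    (∑ i ∈ Finset.range (α.sum + 1),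
        ((-1 : ℤ) ^ i) • hatMul (complComp (restrLe α i)) (restrGt α i)
      = if α = [] then Finsupp.single ([] : List ℕ) (1 : ℤ) else 0) ∧
    (∑ i ∈ Finset.range (α.sum + 1),
        ((-1 : ℤ) ^ (α.sum - i)) • hatMul (restrLe α i) (complComp (restrGt α i))
      = if α = [] then Finsupp.single ([] : List ℕ) (1 : ℤ) else 0) := by
  rcases eq_or_ne α [] with rfl | hne
  · simp [restrLe, restrGt, complComp, hatMul_nil_left]
  have hn : α.sum ≠ 0 := by
    obtain ⟨x, l, rfl⟩ := List.exists_cons_of_ne_nil hne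
    have := hα x List.mem_cons_self
    simp only [List.sum_cons]
    omega
  rw [if_neg hne]
  exact ⟨sum_hatMul_complComp_fromDescents_eq_zero hn _,
    sum_hatMul_fromDescents_complComp_eq_zero hn _⟩
end
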